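/- arXiv:2301.08420 — 6 statements merged into one kernel-verified Lean document; each statement's English description precedes it below -/
import Mathlib

section
/- For any constants α ∈ (0,1], k > 0, there exist constants a₁, a₂ > 0 such that for every λ ≥ 1, defining h_{λ,α}(t) := min{(min(1/2, t))^(-1/(2α)), λ^(1/2)}, one has ∫₀^∞ h_{λ,α}(t) e^{-kt} dt ≤ a₂ λ^((1/2 - α)⁺) (1 + 1_{α = 1/2} log(1 + λ)). -/
/-!
Write `c = 1/(2α)` and `τ = λ^{-α}`, so that `τ λ^{1/2} = λ^{1/2-α}`. The integrand is at most
`λ^{1/2}` on `(0, τ]`, at most `2^c t^{-c}` on `(τ, 1]` (as `min(1/2, t) ≥ t/2` there) and at most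
`2^c e^{-kt}` beyond `1`, so the integral is at most `λ^{1/2-α} + 2^c ∫_τ^1 t^{-c} dt + 2^c/k`.
The remaining integral is `O(λ^{1/2-α})` when `c > 1`, `O(1)` when `c < 1`, and `(log λ)/2`
when `c = 1`, which is where the logarithm comes from.
-/

open MeasureTheory Set Real

section Profile

variable {c t : ℝ}

lemma min_half_rpow_neg_le (hc : 0 ≤ c) (ht : 0 < t) (ht1 : t ≤ 1) :
    (min (1/2) t) ^ (-c) ≤ 2 ^ c * t ^ (-c) := by
  have hmin : t / 2 ≤ min (1/2) t := le_min (by linarith) (by linarith)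
  calc (min (1/2) t) ^ (-c) ≤ (t / 2) ^ (-c) :=
        rpow_le_rpow_of_nonpos (by positivity) hmin (neg_nonpos.mpr hc)
    _ = 2 ^ c * t ^ (-c) := by
        rw [div_rpow ht.le zero_le_two, rpow_neg zero_le_two, div_inv_eq_mul, mul_comm]

lemma min_half_rpow_neg_of_half_le (ht : 1/2 ≤ t) : (min (1/2) t) ^ (-c) = 2 ^ c := by
  rw [min_eq_left ht, one_div, inv_rpow zero_le_two, rpow_neg zero_le_two, inv_inv]

end Profile

section Integral

variable {c k τ M : ℝ}

lemma min_rpow_mul_exp_le_sum_indicator (hc : 0 ≤ c) (hk : 0 < k) (hM : 0 ≤ M) {t : ℝ}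
    (ht : 0 < t) :
    min ((min (1/2) t) ^ (-c)) M * exp (-(k * t)) ≤
      (Ioc 0 τ).indicator (fun _ => M) t + (Ioc τ 1).indicator (fun x => 2 ^ c * x ^ (-c)) t
        + 2 ^ c * exp (-(k * t)) := by
  have hexp : exp (-(k * t)) ≤ 1 := exp_le_one_iff.mpr (by nlinarith)
  have hmin : 0 ≤ min ((min (1/2) t) ^ (-c)) M :=
    le_min (rpow_nonneg (le_min (by norm_num) ht.le) _) hM
  have hI₁ : 0 ≤ (Ioc 0 τ).indicator (fun _ => M) t := indicator_nonneg (fun _ _ => hM) _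
  have hI₂ : 0 ≤ (Ioc τ 1).indicator (fun x => 2 ^ c * x ^ (-c)) t :=
    indicator_apply_nonneg fun _ => by positivity
  have hE : 0 ≤ 2 ^ c * exp (-(k * t)) := by positivity
  rcases le_or_gt t τ with htτ | hτt
  · have hbound : min ((min (1/2) t) ^ (-c)) M * exp (-(k * t)) ≤ M :=
      (mul_le_of_le_one_right hmin hexp).trans (min_le_right _ _)
    rw [indicator_of_mem (show t ∈ Ioc 0 τ from ⟨ht, htτ⟩)]
    linarith
  rcases le_or_gt t 1 with ht1 | ht1
  · have hbound : min ((min (1/2) t) ^ (-c)) M * exp (-(k * t)) ≤ 2 ^ c * t ^ (-c) :=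
      (mul_le_of_le_one_right hmin hexp).trans
        ((min_le_left _ _).trans (min_half_rpow_neg_le hc ht ht1))
    rw [indicator_of_mem (show t ∈ Ioc τ 1 from ⟨hτt, ht1⟩)]
    linarith
  · have hbound : min ((min (1/2) t) ^ (-c)) M * exp (-(k * t)) ≤ 2 ^ c * exp (-(k * t)) := by
      gcongr
      exact (min_le_left _ _).trans (min_half_rpow_neg_of_half_le (by linarith)).le
    linarith

lemma integral_rpow_neg_le_of_lt_one (hc : c < 1) (hτ : 0 ≤ τ) :
    ∫ x in τ..1, x ^ (-c) ≤ 1 / (1 - c) := by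
  rw [integral_rpow (Or.inl (by linarith)), one_rpow, show -c + 1 = 1 - c by ring]
  gcongr
  linarith [rpow_nonneg hτ (1 - c)]

lemma integral_rpow_neg_le_of_one_lt (hc : 1 < c) (hτ : 0 < τ) :
    ∫ x in τ..1, x ^ (-c) ≤ τ ^ (1 - c) / (c - 1) := by
  rw [integral_rpow (Or.inr ⟨by linarith, notMem_uIcc_of_lt hτ one_pos⟩), one_rpow,
    show -c + 1 = 1 - c by ring, ← neg_div_neg_eq, neg_sub, neg_sub]
  gcongr
  linarith

lemma integral_exp_neg_mul_Ioi_zero (hk : 0 < k) :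
    ∫ t in Ioi (0:ℝ), exp (-(k * t)) = 1 / k := by
  simp_rw [← neg_mul]
  rw [integral_exp_mul_Ioi (neg_lt_zero.mpr hk), mul_zero, exp_zero, neg_div_neg_eq]

lemma setIntegral_min_rpow_mul_exp_le (hc : 0 ≤ c) (hk : 0 < k) (hτ : 0 < τ) (hτ1 : τ ≤ 1)
    (hM : 0 ≤ M) :
    ∫ t in Ioi 0, min ((min (1/2) t) ^ (-c)) M * exp (-(k * t))
      ≤ τ * M + 2 ^ c * (∫ x in τ..1, x ^ (-c)) + 2 ^ c / k := by
  have hint₁ : IntegrableOn ((Ioc 0 τ).indicator fun _ => M) (Ioi 0) :=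
    (integrableOn_const measure_Ioc_lt_top.ne).integrable_indicator measurableSet_Ioc
      |>.integrableOn
  have hint₂ : IntegrableOn ((Ioc τ 1).indicator fun x => 2 ^ c * x ^ (-c)) (Ioi 0) :=
    ((intervalIntegral.intervalIntegrable_rpow (Or.inr (notMem_uIcc_of_lt hτ one_pos))).const_mul
      _).1.integrable_indicator measurableSet_Ioc |>.integrableOn
  have hint₃ : IntegrableOn (fun t : ℝ => 2 ^ c * exp (-(k * t))) (Ioi 0) := by
    simpa only [neg_mul, IntegrableOn] using (exp_neg_integrableOn_Ioi 0 hk).const_mul (2 ^ c)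
  have hint₁₂ : IntegrableOn (fun t => (Ioc 0 τ).indicator (fun _ => M) t
      + (Ioc τ 1).indicator (fun x => 2 ^ c * x ^ (-c)) t) (Ioi 0) := hint₁.add hint₂
  have hIoc₁ : Ioi 0 ∩ Ioc 0 τ = Ioc 0 τ := inter_eq_right.mpr Ioc_subset_Ioi_self
  have hIoc₂ : Ioi 0 ∩ Ioc τ 1 = Ioc τ 1 :=
    inter_eq_right.mpr fun x hx => hτ.trans hx.1
  calc ∫ t in Ioi 0, min ((min (1/2) t) ^ (-c)) M * exp (-(k * t))
      ≤ ∫ t in Ioi 0, ((Ioc 0 τ).indicator (fun _ => M) t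
          + (Ioc τ 1).indicator (fun x => 2 ^ c * x ^ (-c)) t + 2 ^ c * exp (-(k * t))) := by
        refine integral_mono_of_nonneg ?_ ?_ ?_
        · filter_upwards [ae_restrict_mem measurableSet_Ioi] with t ht
          exact mul_nonneg (le_min (rpow_nonneg (le_min (by norm_num) (le_of_lt ht)) _) hM)
            (exp_nonneg _)
        · exact hint₁₂.add hint₃
        · filter_upwards [ae_restrict_mem measurableSet_Ioi] with t ht
          exact min_rpow_mul_exp_le_sum_indicator hc hk hM ht
    _ = τ * M + 2 ^ c * (∫ x in τ..1, x ^ (-c)) + 2 ^ c / k := by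
        rw [integral_add hint₁₂ hint₃, integral_add hint₁ hint₂,
          setIntegral_indicator measurableSet_Ioc, setIntegral_indicator measurableSet_Ioc, hIoc₁,
          hIoc₂, setIntegral_const, volume_real_Ioc_of_le hτ.le, integral_const_mul,
          integral_const_mul, integral_exp_neg_mul_Ioi_zero hk, intervalIntegral.integral_of_le hτ1]
        simp only [sub_zero, smul_eq_mul]
        ring

end Integral

noncomputable def rate (α lam : ℝ) : ℝ :=
  lam ^ (max (1/2 - α) 0) * (1 + if α = 1/2 then log (1 + lam) else 0)

section Rate

variable {α lam : ℝ}

lemma one_le_one_add_ite_log (hlam : 1 ≤ lam) :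
    1 ≤ 1 + if α = 1/2 then log (1 + lam) else 0 := by
  split_ifs
  · linarith [log_nonneg (by linarith : (1:ℝ) ≤ 1 + lam)]
  · simp

lemma rpow_le_rate (hlam : 1 ≤ lam) : lam ^ (1/2 - α) ≤ rate α lam :=
  calc lam ^ (1/2 - α) ≤ lam ^ (max (1/2 - α) 0) :=
        rpow_le_rpow_of_exponent_le hlam (le_max_left _ _)
    _ ≤ rate α lam := le_mul_of_one_le_right (by positivity) (one_le_one_add_ite_log hlam)

lemma one_le_rate (hlam : 1 ≤ lam) : 1 ≤ rate α lam :=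
  one_le_mul_of_one_le_of_one_le (one_le_rpow hlam (le_max_right _ _))
    (one_le_one_add_ite_log hlam)

lemma exists_integral_rpow_neg_le_rate (hα : 0 < α) :
    ∃ C, 0 < C ∧ ∀ lam, 1 ≤ lam → ∫ x in lam ^ (-α)..1, x ^ (-(1/(2*α))) ≤ C * rate α lam := by
  rcases lt_trichotomy α (1/2) with hlt | rfl | hgt
  · have hc : 1 < 1 / (2 * α) := by rw [lt_div_iff₀ (by positivity)]; linarith
    refine ⟨1 / (1 / (2 * α) - 1), by simp only [one_div_pos, sub_pos, hc], fun lam hlam => ?_⟩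
    have hlam0 : 0 < lam := by linarith
    have hτ : (lam ^ (-α)) ^ (1 - 1 / (2 * α)) = lam ^ (1/2 - α) := by
      rw [← rpow_mul hlam0.le]
      congr 1
      field_simp
      ring
    calc _ ≤ (lam ^ (-α)) ^ (1 - 1 / (2 * α)) / (1 / (2 * α) - 1) :=
          integral_rpow_neg_le_of_one_lt hc (by positivity)
      _ ≤ 1 / (1 / (2 * α) - 1) * rate α lam := by
          rw [hτ, one_div_mul_eq_div]
          gcongr
          exact rpow_le_rate hlam
  · refine ⟨1, one_pos, fun lam hlam => ?_⟩
    have hlam0 : 0 < lam := by linarith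
    have hτ : (0:ℝ) < lam ^ (-(1/2:ℝ)) := by positivity
    rw [show (1:ℝ) / (2 * (1/2)) = 1 by norm_num]
    simp only [rpow_neg_one]
    rw [integral_inv (notMem_uIcc_of_lt hτ one_pos), one_div, log_inv, log_rpow hlam0]
    simp only [rate, sub_self, max_self, rpow_zero, if_true, one_mul]
    linarith [log_le_log hlam0 (by linarith : lam ≤ 1 + lam), log_nonneg hlam]
  · have hc : 1 / (2 * α) < 1 := by rw [div_lt_one (by positivity)]; linarith
    refine ⟨1 / (1 - 1 / (2 * α)), by simp only [one_div_pos, sub_pos, hc], fun lam hlam => ?_⟩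
    calc _ ≤ 1 / (1 - 1 / (2 * α)) := integral_rpow_neg_le_of_lt_one hc (by positivity)
      _ ≤ _ := le_mul_of_one_le_right (by simp only [one_div_nonneg, sub_nonneg, hc.le])
          (one_le_rate hlam)

end Rate

theorem stmt0_general (α k : ℝ) (hα : 0 < α) (hk : 0 < k) :
    ∃ a₁ a₂ : ℝ, 0 < a₁ ∧ 0 < a₂ ∧ ∀ lam : ℝ, 1 ≤ lam →
      (∫ t in Ioi (0:ℝ),
          min ((min (1/2) t) ^ (-(1/(2*α)))) (lam ^ ((1:ℝ)/2)) * Real.exp (-(k * t)))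
        ≤ a₂ * lam ^ (max (1/2 - α) 0) *
            (1 + (if α = 1/2 then Real.log (1 + lam) else 0)) := by
  obtain ⟨C, hC, hJ⟩ := exists_integral_rpow_neg_le_rate hα
  set c := 1/(2*α)
  refine ⟨1, 1 + 2 ^ c * C + 2 ^ c / k, one_pos, by positivity, fun lam hlam => ?_⟩
  have hlam0 : 0 < lam := by linarith
  have hτM : lam ^ (-α) * lam ^ ((1:ℝ)/2) = lam ^ (1/2 - α) := by
    rw [← rpow_add hlam0]; ring_nf
  have hrate := one_le_rate (α := α) hlam
  calc _ ≤ lam ^ (-α) * lam ^ ((1:ℝ)/2) + 2 ^ c * (∫ x in lam ^ (-α)..1, x ^ (-c))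
          + 2 ^ c / k :=
        setIntegral_min_rpow_mul_exp_le (by positivity) hk (by positivity)
          (rpow_le_one_of_one_le_of_nonpos hlam (by linarith)) (by positivity)
    _ ≤ rate α lam + 2 ^ c * (C * rate α lam) + 2 ^ c / k * rate α lam := by
        rw [hτM]
        gcongr
        · exact rpow_le_rate hlam
        · exact hJ lam hlam
        · exact le_mul_of_one_le_right (by positivity) hrate
    _ = _ := by rw [rate]; ring

/-- For any constants `α ∈ (0,1]`, `k > 0`, there exist constants `a₁, a₂ > 0` such that
for every `λ ≥ 1`, with `h_{λ,α}(t) := min ((min (1/2) t)^(-1/(2α))) (λ^(1/2))`,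
`∫₀^∞ h_{λ,α}(t) e^{-kt} dt ≤ a₂ λ^((1/2 - α)⁺) (1 + 1_{α = 1/2} log (1 + λ))`. -/
theorem stmt0 (α k : ℝ) (hα : 0 < α) (hα1 : α ≤ 1) (hk : 0 < k) :
    ∃ a₁ a₂ : ℝ, 0 < a₁ ∧ 0 < a₂ ∧ ∀ lam : ℝ, 1 ≤ lam →
      (∫ t in Ioi (0:ℝ),
          min ((min (1/2) t) ^ (-(1/(2*α)))) (lam ^ ((1:ℝ)/2)) * Real.exp (-(k * t)))
        ≤ a₂ * lam ^ (max (1/2 - α) 0) *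
            (1 + (if α = 1/2 then Real.log (1 + lam) else 0)) :=
  stmt0_general α k hα hk
end

section
/- Let d' ≥ 1, c₃ > 0, and θ ≥ 0 with eigenvalue lower bound λ_i ≥ c (i)^{2/d'} for all i ≥ 1 and some c > 0. Then there exists a constant C > 0 such that for all r ∈ (0,1], ∑_{i=1}^∞ λ_i^{-θ} e^{-λ_i r} ≤ C ( r^{-(d'/2 - θ)⁺} + 1_{d'/2 = θ} log(1 + r^{-1}) ). -/
/-!
Since `λ_i ≥ c i^{2/d'}` and `t ↦ t^{-θ} e^{-t r}` is decreasing, the `i`-th term is at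
most `c^{-θ} g(i)` with `g(x) = x^{-2θ/d'} exp(-c r x^{2/d'})`; as `g` is decreasing, the
series is at most `c^{-θ} (g(1) + ∫_1^∞ g)`. For `2θ/d' < 1` the integral is dominated by the
Gamma integral `∫_0^∞ g = O(r^{-(d'/2-θ)})`, and for `2θ/d' > 1` by `∫_1^∞ x^{-2θ/d'} dx`.
In the critical case `2θ/d' = 1` we split at `T = r^{-d'/2}`: `∫_1^T dx/x = (d'/2) log(1/r)`,
and beyond `T` we use `x^{-1} ≤ T^{-2/d'} x^{2/d'-1}`, whose Gamma integral against
`exp(-c r x^{2/d'})` is `O(1/r)`, cancelling the factor `T^{-2/d'} = r`.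
-/

open Set MeasureTheory Real

noncomputable def rpowExpKernel (a q b x : ℝ) : ℝ := x ^ (-a) * exp (-b * x ^ q)

section Kernel

variable {a q b : ℝ}

lemma rpowExpKernel_nonneg {x : ℝ} (hx : 0 ≤ x) : 0 ≤ rpowExpKernel a q b x := by
  unfold rpowExpKernel
  positivity

lemma rpowExpKernel_le_rpow (hb : 0 ≤ b) {x : ℝ} (hx : 0 ≤ x) :
    rpowExpKernel a q b x ≤ x ^ (-a) := by
  refine mul_le_of_le_one_right (rpow_nonneg hx _) (exp_le_one_iff.2 ?_)
  rw [neg_mul, neg_nonpos]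
  exact mul_nonneg hb (rpow_nonneg hx _)

lemma rpowExpKernel_le_of_exponent_le {a' : ℝ} (ha : a' ≤ a) {x : ℝ} (hx : 1 ≤ x) :
    rpowExpKernel a q b x ≤ rpowExpKernel a' q b x :=
  mul_le_mul_of_nonneg_right (rpow_le_rpow_of_exponent_le hx (neg_le_neg ha)) (exp_pos _).le

lemma antitoneOn_rpowExpKernel (ha : 0 ≤ a) (hq : 0 ≤ q) (hb : 0 ≤ b) :
    AntitoneOn (rpowExpKernel a q b) (Ioi 0) := by
  intro x hx y _ hxy
  refine mul_le_mul (rpow_le_rpow_of_nonpos hx hxy (neg_nonpos.2 ha)) ?_ (exp_pos _).le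
    (rpow_nonneg (le_of_lt hx) _)
  rw [exp_le_exp, neg_mul, neg_mul, neg_le_neg_iff]
  exact mul_le_mul_of_nonneg_left (rpow_le_rpow (le_of_lt hx) hxy hq) hb

lemma measurable_rpowExpKernel : Measurable (rpowExpKernel a q b) := by
  unfold rpowExpKernel
  fun_prop

lemma integrableOn_rpowExpKernel_Ioi_zero (ha : a < 1) (hq : 0 < q) (hb : 0 < b) :
    IntegrableOn (rpowExpKernel a q b) (Ioi 0) :=
  integrableOn_rpow_mul_exp_neg_mul_rpow (by linarith) hq hb

lemma integrableOn_rpowExpKernel_Ioi_one (hq : 0 < q) (hb : 0 < b) :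
    IntegrableOn (rpowExpKernel a q b) (Ioi 1) := by
  refine Integrable.mono' (((integrableOn_rpowExpKernel_Ioi_zero (a := min a 0)
    (min_lt_of_right_lt one_pos) hq hb)).mono_set (Ioi_subset_Ioi zero_le_one))
    measurable_rpowExpKernel.aestronglyMeasurable ?_
  filter_upwards [ae_restrict_mem measurableSet_Ioi] with x hx
  have hx : (1 : ℝ) ≤ x := le_of_lt hx
  rw [norm_of_nonneg (rpowExpKernel_nonneg (by linarith))]
  exact rpowExpKernel_le_of_exponent_le (min_le_left a 0) hx

lemma integral_rpowExpKernel_Ioi_zero (ha : a < 1) (hq : 0 < q) (hb : 0 < b) :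
    ∫ x in Ioi 0, rpowExpKernel a q b x
      = b ^ (-((1 - a) / q)) * (1 / q) * Gamma ((1 - a) / q) := by
  have h := integral_rpow_mul_exp_neg_mul_rpow hq (by linarith : -1 < -a) hb
  rwa [show -a + 1 = 1 - a by ring, neg_div] at h

lemma setIntegral_rpowExpKernel_Ioi_one_le_of_lt_one (ha : a < 1) (hq : 0 < q) (hb : 0 < b) :
    ∫ x in Ioi 1, rpowExpKernel a q b x
      ≤ b ^ (-((1 - a) / q)) * (1 / q) * Gamma ((1 - a) / q) := by
  rw [← integral_rpowExpKernel_Ioi_zero ha hq hb]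
  refine setIntegral_mono_set (integrableOn_rpowExpKernel_Ioi_zero ha hq hb) ?_
    (Ioi_subset_Ioi zero_le_one).eventuallyLE
  filter_upwards [ae_restrict_mem measurableSet_Ioi] with x hx
  exact rpowExpKernel_nonneg (le_of_lt hx)

lemma setIntegral_rpowExpKernel_Ioi_one_le_of_one_lt (ha : 1 < a) (hq : 0 < q) (hb : 0 < b) :
    ∫ x in Ioi 1, rpowExpKernel a q b x ≤ 1 / (a - 1) := calc
  _ ≤ ∫ x in Ioi 1, x ^ (-a) :=
    setIntegral_mono_on (integrableOn_rpowExpKernel_Ioi_one hq hb)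
      (integrableOn_Ioi_rpow_of_lt (by linarith) one_pos) measurableSet_Ioi
      fun x hx => rpowExpKernel_le_rpow hb.le (zero_le_one.trans (le_of_lt hx))
  _ = 1 / (a - 1) := by
    rw [integral_Ioi_rpow_of_lt (by linarith) one_pos, one_rpow,
      show -a + 1 = -(a - 1) by ring, div_neg, neg_div, neg_neg]

lemma setIntegral_rpowExpKernel_one_Ioi_one_le (hq : 0 < q) (hb : 0 < b) {T : ℝ} (hT : 1 ≤ T) :
    ∫ x in Ioi 1, rpowExpKernel 1 q b x ≤ log T + T ^ (-q) / (b * q) := by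
  have hint := integrableOn_rpowExpKernel_Ioi_one (a := 1) hq hb
  rw [← Ioc_union_Ioi_eq_Ioi hT, setIntegral_union Ioc_disjoint_Ioi_same measurableSet_Ioi
    (hint.mono_set Ioc_subset_Ioi_self) (hint.mono_set (Ioi_subset_Ioi hT))]
  have hnear : ∫ x in Ioc 1 T, rpowExpKernel 1 q b x ≤ log T := calc
    _ ≤ ∫ x in Ioc 1 T, x⁻¹ := by
      refine setIntegral_mono_on (hint.mono_set Ioc_subset_Ioi_self) ?_ measurableSet_Ioc
        fun x hx => (rpowExpKernel_le_rpow hb.le (by linarith [hx.1])).trans_eq (rpow_neg_one x)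
      refine (ContinuousOn.integrableOn_Icc ?_).mono_set Ioc_subset_Icc_self
      exact continuousOn_inv₀.mono fun x hx => ne_of_gt (by linarith [hx.1])
    _ = log T := by
      rw [← intervalIntegral.integral_of_le hT, integral_inv_of_pos one_pos (by linarith),
        div_one]
  have hfar : ∫ x in Ioi T, rpowExpKernel 1 q b x ≤ T ^ (-q) / (b * q) := calc
    _ ≤ ∫ x in Ioi T, T ^ (-q) * rpowExpKernel (1 - q) q b x := by
      refine setIntegral_mono_on (hint.mono_set (Ioi_subset_Ioi hT))
        (((integrableOn_rpowExpKernel_Ioi_zero (a := 1 - q) (by linarith) hq hb).mono_set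
          (Ioi_subset_Ioi (by linarith : (0 : ℝ) ≤ T))).const_mul _) measurableSet_Ioi
        fun x hx => ?_
      have hx0 : 0 < x := by linarith [mem_Ioi.1 hx]
      rw [rpowExpKernel, rpowExpKernel, ← mul_assoc, show -1 = -q + -(1 - q) by ring,
        rpow_add hx0]
      gcongr ?_ * _ * _
      exact rpow_le_rpow_of_nonpos (by linarith) (le_of_lt hx) (by linarith)
    _ = T ^ (-q) * ∫ x in Ioi T, rpowExpKernel (1 - q) q b x := integral_const_mul _ _
    _ ≤ T ^ (-q) * ∫ x in Ioi 0, rpowExpKernel (1 - q) q b x := by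
      refine mul_le_mul_of_nonneg_left (setIntegral_mono_set
        (integrableOn_rpowExpKernel_Ioi_zero (by linarith) hq hb) ?_
        (Ioi_subset_Ioi (by linarith)).eventuallyLE) (by positivity)
      filter_upwards [ae_restrict_mem measurableSet_Ioi] with x hx
      exact rpowExpKernel_nonneg (le_of_lt hx)
    _ = T ^ (-q) / (b * q) := by
      rw [integral_rpowExpKernel_Ioi_zero (by linarith) hq hb, sub_sub_cancel, div_self hq.ne',
        Gamma_one, rpow_neg_one]
      field_simp
  linarith

end Kernel

lemma sum_range_le_add_setIntegral_Ioi {f : ℝ → ℝ} (hf : AntitoneOn f (Ici 1))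
    (hf0 : ∀ x ∈ Ici 1, 0 ≤ f x) (hint : IntegrableOn f (Ioi 1)) (n : ℕ) :
    ∑ i ∈ Finset.range n, f (i + 1) ≤ f 1 + ∫ x in Ioi 1, f x := by
  have hI : 0 ≤ ∫ x in Ioi 1, f x :=
    setIntegral_nonneg measurableSet_Ioi fun x hx => hf0 x (mem_Ici.2 (le_of_lt hx))
  cases n with
  | zero => simpa using add_nonneg (hf0 1 (mem_Ici.2 le_rfl)) hI
  | succ n =>
    have hsum := (hf.mono (Icc_subset_Ici_self : Icc (1 : ℝ) (1 + n) ⊆ Ici 1)).sum_le_integral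
    have htail : ∫ x in (1 : ℝ)..1 + n, f x ≤ ∫ x in Ioi 1, f x := by
      rw [intervalIntegral.integral_of_le (by linarith [n.cast_nonneg (α := ℝ)])]
      refine setIntegral_mono_set hint ?_ Ioc_subset_Ioi_self.eventuallyLE
      filter_upwards [ae_restrict_mem measurableSet_Ioi] with x hx
      exact hf0 x (mem_Ici.2 (le_of_lt hx))
    rw [Finset.sum_range_succ', Nat.cast_zero, zero_add, add_comm]
    push_cast at hsum ⊢
    simp only [add_comm _ (1 : ℝ), ← add_assoc] at hsum ⊢
    linarith

lemma rpow_neg_mul_exp_neg_mul_le {m l θ r : ℝ} (hm : 0 < m) (hml : m ≤ l) (hθ : 0 ≤ θ)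
    (hr : 0 ≤ r) : l ^ (-θ) * exp (-(l * r)) ≤ m ^ (-θ) * exp (-(m * r)) :=
  mul_le_mul (rpow_le_rpow_of_nonpos hm hml (neg_nonpos.2 hθ))
    (exp_le_exp.2 (neg_le_neg (mul_le_mul_of_nonneg_right hml hr))) (exp_pos _).le
    (rpow_nonneg hm.le _)

lemma tsum_rpow_neg_mul_exp_neg_le {d' c θ r : ℝ} (hd : 0 < d') (hc : 0 < c) (hθ : 0 ≤ θ)
    (hr : 0 < r) {lam : ℕ → ℝ} (hlow : ∀ i : ℕ, 1 ≤ i → c * (i : ℝ) ^ (2 / d') ≤ lam i) :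
    ∑' i : ℕ, lam (i + 1) ^ (-θ) * exp (-(lam (i + 1) * r))
      ≤ c ^ (-θ) * (1 + ∫ x in Ioi 1, rpowExpKernel (2 * θ / d') (2 / d') (c * r) x) := by
  set f := rpowExpKernel (2 * θ / d') (2 / d') (c * r)
  have hlow' (i : ℕ) : c * ((i : ℝ) + 1) ^ (2 / d') ≤ lam (i + 1) := by
    exact_mod_cast hlow (i + 1) (by omega)
  have hterm (i : ℕ) :
      lam (i + 1) ^ (-θ) * exp (-(lam (i + 1) * r)) ≤ c ^ (-θ) * f (i + 1) := by
    have hi : (0 : ℝ) < i + 1 := by positivity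
    calc _ ≤ (c * ((i : ℝ) + 1) ^ (2 / d')) ^ (-θ)
            * exp (-(c * ((i : ℝ) + 1) ^ (2 / d') * r)) :=
          rpow_neg_mul_exp_neg_mul_le (by positivity) (hlow' i) hθ hr.le
      _ = c ^ (-θ) * f (i + 1) := by
          rw [mul_rpow hc.le (rpow_nonneg hi.le _), ← rpow_mul hi.le]
          simp only [f, rpowExpKernel]
          ring_nf
  have hf1 : f 1 ≤ 1 := by
    simpa [f, rpowExpKernel] using (mul_pos hc hr).le
  refine Real.tsum_le_of_sum_range_le
    (fun i => mul_nonneg (rpow_nonneg ((by positivity : (0 : ℝ) ≤ _).trans (hlow' i)) _)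
      (exp_pos _).le) fun n => ?_
  calc _ ≤ ∑ i ∈ Finset.range n, c ^ (-θ) * f (i + 1) :=
        Finset.sum_le_sum fun i _ => hterm i
    _ = c ^ (-θ) * ∑ i ∈ Finset.range n, f (i + 1) := (Finset.mul_sum _ _ _).symm
    _ ≤ c ^ (-θ) * (f 1 + ∫ x in Ioi 1, f x) := by
        gcongr
        exact sum_range_le_add_setIntegral_Ioi
          ((antitoneOn_rpowExpKernel (by positivity) (by positivity) (by positivity)).mono
            fun x hx => mem_Ioi.2 (lt_of_lt_of_le one_pos hx))
          (fun x hx => rpowExpKernel_nonneg (zero_le_one.trans hx))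
          (integrableOn_rpowExpKernel_Ioi_one (by positivity) (by positivity)) n
    _ ≤ c ^ (-θ) * (1 + ∫ x in Ioi 1, f x) := by gcongr

section Regimes

variable {d' c θ : ℝ}

lemma exists_integral_le_rpow_of_lt (hd : 0 < d') (hc : 0 < c) (hθ : θ < d' / 2) :
    ∃ C : ℝ, 0 < C ∧ ∀ r : ℝ, 0 < r → r ≤ 1 →
      1 + ∫ x in Ioi 1, rpowExpKernel (2 * θ / d') (2 / d') (c * r) x
        ≤ C * r ^ (-(d' / 2 - θ)) := by
  have hα : 0 < d' / 2 - θ := by linarith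
  set M := c ^ (-(d' / 2 - θ)) * (1 / (2 / d')) * Gamma (d' / 2 - θ)
  have hM : 0 < M := by have := Gamma_pos_of_pos hα; positivity
  refine ⟨1 + M, by positivity, fun r hr hr1 => ?_⟩
  have ha : 2 * θ / d' < 1 := by rw [div_lt_one hd]; linarith
  have hI := setIntegral_rpowExpKernel_Ioi_one_le_of_lt_one (q := 2 / d') ha (by positivity)
    (mul_pos hc hr)
  rw [show (1 - 2 * θ / d') / (2 / d') = d' / 2 - θ by field_simp,
    mul_rpow hc.le hr.le] at hI
  have h1 : 1 ≤ r ^ (-(d' / 2 - θ)) :=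
    one_le_rpow_of_pos_of_le_one_of_nonpos hr hr1 (by linarith)
  calc _ ≤ r ^ (-(d' / 2 - θ)) + M * r ^ (-(d' / 2 - θ)) :=
        add_le_add h1 (hI.trans_eq (by ring))
    _ = (1 + M) * r ^ (-(d' / 2 - θ)) := by ring

lemma exists_integral_le_of_gt (hd : 0 < d') (hc : 0 < c) (hθ : d' / 2 < θ) :
    ∃ C : ℝ, 0 < C ∧ ∀ r : ℝ, 0 < r →
      1 + ∫ x in Ioi 1, rpowExpKernel (2 * θ / d') (2 / d') (c * r) x ≤ C := by
  have ha : 1 < 2 * θ / d' := by rw [one_lt_div hd]; linarith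
  have ha' : 0 < 2 * θ / d' - 1 := by linarith
  refine ⟨1 + 1 / (2 * θ / d' - 1), by positivity, fun r hr => ?_⟩
  linarith [setIntegral_rpowExpKernel_Ioi_one_le_of_one_lt (q := 2 / d') ha (by positivity)
    (mul_pos hc hr)]

lemma exists_integral_le_log_of_eq (hd : 0 < d') (hc : 0 < c) (hθ : θ = d' / 2) :
    ∃ C : ℝ, 0 < C ∧ ∀ r : ℝ, 0 < r → r ≤ 1 →
      1 + ∫ x in Ioi 1, rpowExpKernel (2 * θ / d') (2 / d') (c * r) x
        ≤ C * (1 + log (1 + r⁻¹)) := by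
  refine ⟨1 + d' / 2 + d' / (2 * c), by positivity, fun r hr hr1 => ?_⟩
  have hT : 1 ≤ r ^ (-(d' / 2)) := one_le_rpow_of_pos_of_le_one_of_nonpos hr hr1 (by linarith)
  have hI :=
    setIntegral_rpowExpKernel_one_Ioi_one_le (q := 2 / d') (by positivity) (mul_pos hc hr) hT
  rw [log_rpow hr, ← rpow_mul hr.le, show -(d' / 2) * -(2 / d') = 1 by field_simp, rpow_one,
    show r / (c * r * (2 / d')) = d' / (2 * c) by field_simp] at hI
  rw [hθ, show 2 * (d' / 2) / d' = 1 by field_simp]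
  have hlog : -(d' / 2) * log r ≤ d' / 2 * log (1 + r⁻¹) := by
    rw [neg_mul, ← mul_neg, ← log_inv]
    gcongr
    linarith
  have hL : 0 ≤ log (1 + r⁻¹) := log_nonneg (by linarith [inv_pos.2 hr])
  nlinarith [mul_nonneg (by positivity : (0 : ℝ) ≤ 1 + d' / (2 * c)) hL]

end Regimes

theorem stmt2_general (d' c θ : ℝ) (hd' : 1 ≤ d') (hc : 0 < c) (hθ : 0 ≤ θ)
    (lam : ℕ → ℝ)
    (hlow : ∀ i : ℕ, 1 ≤ i → c * (i : ℝ) ^ (2/d') ≤ lam i) :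
    ∃ C : ℝ, 0 < C ∧ ∀ r : ℝ, 0 < r → r ≤ 1 →
      (∑' i : ℕ, lam (i+1) ^ (-θ) * Real.exp (-(lam (i+1) * r)))
        ≤ C * (r ^ (-(max (d'/2 - θ) 0)) +
            (if d'/2 = θ then Real.log (1 + r⁻¹) else 0)) := by
  have hd : 0 < d' := by linarith
  obtain ⟨C, hC, hI⟩ : ∃ C : ℝ, 0 < C ∧ ∀ r : ℝ, 0 < r → r ≤ 1 →
      1 + ∫ x in Ioi 1, rpowExpKernel (2 * θ / d') (2 / d') (c * r) x
        ≤ C * (r ^ (-(max (d'/2 - θ) 0)) +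
            (if d'/2 = θ then Real.log (1 + r⁻¹) else 0)) := by
    rcases lt_trichotomy θ (d' / 2) with h | h | h
    · obtain ⟨C, hC, hI⟩ := exists_integral_le_rpow_of_lt hd hc h
      refine ⟨C, hC, fun r hr hr1 => ?_⟩
      rw [max_eq_left (by linarith), if_neg (by linarith), add_zero]
      exact hI r hr hr1
    · obtain ⟨C, hC, hI⟩ := exists_integral_le_log_of_eq hd hc h
      refine ⟨C, hC, fun r hr hr1 => ?_⟩
      rw [← h, sub_self, max_self, neg_zero, rpow_zero, if_pos rfl]
      exact hI r hr hr1
    · obtain ⟨C, hC, hI⟩ := exists_integral_le_of_gt hd hc h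
      refine ⟨C, hC, fun r hr _ => ?_⟩
      rw [max_eq_right (by linarith), if_neg (by linarith), neg_zero, rpow_zero, add_zero,
        mul_one]
      exact hI r hr
  refine ⟨c ^ (-θ) * C, by positivity, fun r hr hr1 => ?_⟩
  calc _ ≤ c ^ (-θ) * (1 + ∫ x in Ioi 1, rpowExpKernel (2 * θ / d') (2 / d') (c * r) x) :=
        tsum_rpow_neg_mul_exp_neg_le hd hc hθ hr hlow
    _ ≤ _ := by
        rw [mul_assoc]
        gcongr
        exact hI r hr hr1

/-- Eigenvalue series bound: if `λ_i ≥ c i^{2/d'}` for `i ≥ 1` (with `λ` positive and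
nondecreasing), `d' ≥ 1` and `θ ≥ 0`, then there is `C > 0` such that for all `r ∈ (0,1]`,
`∑_{i≥1} λ_i^{-θ} e^{-λ_i r} ≤ C (r^{-(d'/2-θ)⁺} + 1_{d'/2=θ} log(1+r⁻¹))`. -/
theorem stmt2 (d' c θ : ℝ) (hd' : 1 ≤ d') (hc : 0 < c) (hθ : 0 ≤ θ)
    (lam : ℕ → ℝ) (hpos : ∀ i : ℕ, 1 ≤ i → 0 < lam i)
    (hmono : ∀ i j : ℕ, 1 ≤ i → i ≤ j → lam i ≤ lam j)
    (hlow : ∀ i : ℕ, 1 ≤ i → c * (i : ℝ) ^ (2/d') ≤ lam i) :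
    ∃ C : ℝ, 0 < C ∧ ∀ r : ℝ, 0 < r → r ≤ 1 →
      (∑' i : ℕ, lam (i+1) ^ (-θ) * Real.exp (-(lam (i+1) * r)))
        ≤ C * (r ^ (-(max (d'/2 - θ) 0)) +
            (if d'/2 = θ then Real.log (1 + r⁻¹) else 0)) :=
  stmt2_general d' c θ hd' hc hθ lam hlow
end

section
/- Let λ_i, λ > 0 with λ_i ≥ λ. Then for any T > 0, ∫₀^T e^{-λ_i (T - s)} e^{-λ s} s^{-1/2} ds ≤ e^{-λ T / 2} (∫₀^T e^{-λ_i (T-s)/2} ds) · (1/T) ∫₀^T s^{-1/2} e^{-λ s / 2} ds, and consequently there exists a constant c > 0 (depending only on λ) such that ∫₀^T e^{-λ_i(T-s)} e^{-λ s} s^{-1/2} ds ≤ (c/λ_i) e^{-λ T/2} T^{-1/2} for all T > 0 and all λ_i ≥ λ. -/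
/-!
Since `λ_i ≥ λ`, the integrand is at most `e^{-λT/2} f(s) g(s)` with `f(s) = s^{-1/2} e^{-λs/2}`
decreasing and `g(s) = e^{-λ_i(T-s)/2}` increasing. Chebyshev's integral inequality, obtained by
integrating `(f(s) - f(t))(g(s) - g(t)) ≤ 0` over the square, bounds the mean of `f g` by the
product of the means. The constant `c = 4` then comes from `∫₀^T g ≤ 2/λ_i` and
`∫₀^T f ≤ ∫₀^T s^{-1/2} ds = 2√T`.
-/

open MeasureTheory Set Real

section Chebyshev

variable {α : Type*} [MeasurableSpace α] {μ : Measure α} [IsFiniteMeasure μ] {f g : α → ℝ}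
  {S : Set α}

theorem AntivaryOn.measureReal_univ_mul_integral_mul_le (h : AntivaryOn f g S)
    (hS : ∀ᵐ x ∂μ, x ∈ S) (hf : Integrable f μ) (hg : Integrable g μ)
    (hfg : Integrable (fun x => f x * g x) μ) :
    μ.real univ * ∫ x, f x * g x ∂μ ≤ (∫ x, f x ∂μ) * ∫ x, g x ∂μ := by
  set M := μ.real univ
  set F := ∫ x, f x ∂μ
  set G := ∫ x, g x ∂μ
  set FG := ∫ x, f x * g x ∂μ
  have inner (s : α) :
      ∫ t, (f s - f t) * (g s - g t) ∂μ = M * (f s * g s) - f s * G - F * g s + FG := by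
    have h₁ : Integrable (fun t => f s * g s - f s * g t) μ :=
      (integrable_const _).sub (hg.const_mul _)
    have h₂ : Integrable (fun t => f s * g s - f s * g t - f t * g s) μ :=
      h₁.sub (hf.mul_const _)
    have expand : (fun t => (f s - f t) * (g s - g t))
        = fun t => f s * g s - f s * g t - f t * g s + f t * g t := by
      funext t; ring
    rw [expand, integral_add h₂ hfg, integral_sub h₁ (hf.mul_const _),
      integral_sub (integrable_const _) (hg.const_mul _), integral_const, integral_const_mul,
      integral_mul_const, smul_eq_mul]
  have outer : ∫ s, (M * (f s * g s) - f s * G - F * g s + FG) ∂μ = 2 * (M * FG - F * G) := by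
    have h₁ : Integrable (fun s => M * (f s * g s) - f s * G) μ :=
      (hfg.const_mul _).sub (hf.mul_const _)
    have h₂ : Integrable (fun s => M * (f s * g s) - f s * G - F * g s) μ :=
      h₁.sub (hg.const_mul _)
    rw [integral_add h₂ (integrable_const _), integral_sub h₁ (hg.const_mul _),
      integral_sub (hfg.const_mul _) (hf.mul_const _), integral_const, integral_const_mul,
      integral_mul_const, integral_const_mul, smul_eq_mul]
    ring
  have double_nonpos : ∫ s, ∫ t, (f s - f t) * (g s - g t) ∂μ ∂μ ≤ 0 := by
    refine integral_nonpos_of_ae ?_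
    filter_upwards [hS] with s hs
    refine integral_nonpos_of_ae ?_
    filter_upwards [hS] with t ht
    exact h.sub_mul_sub_nonpos ht hs
  simp_rw [inner] at double_nonpos
  linarith [outer ▸ double_nonpos]

end Chebyshev

theorem integral_exp_neg_mul_sub {a : ℝ} (ha : a ≠ 0) (T : ℝ) :
    ∫ s in 0..T, exp (-(a * (T - s))) = (1 - exp (-(a * T))) / a := by
  have affine (s : ℝ) : -(a * (T - s)) = a * s + -(a * T) := by ring
  simp_rw [affine]
  rw [intervalIntegral.integral_comp_mul_add (fun x => exp x) ha, integral_exp, smul_eq_mul,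
    add_neg_cancel, mul_zero, zero_add, exp_zero, div_eq_inv_mul]

theorem setIntegral_Ioc_exp_neg_mul_sub_le {a T : ℝ} (ha : 0 < a) (hT : 0 ≤ T) :
    ∫ s in Ioc 0 T, exp (-(a * (T - s))) ≤ 1 / a := by
  rw [← intervalIntegral.integral_of_le hT, integral_exp_neg_mul_sub ha.ne']
  gcongr
  linarith [exp_pos (-(a * T))]

theorem setIntegral_Ioc_rpow {r T : ℝ} (hr : -1 < r) (hT : 0 ≤ T) :
    ∫ s in Ioc 0 T, s ^ r = T ^ (r + 1) / (r + 1) := by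
  rw [← intervalIntegral.integral_of_le hT, integral_rpow (.inl hr),
    zero_rpow (by linarith), sub_zero]

theorem integrableOn_Ioc_rpow_mul {r : ℝ} (hr : -1 < r) {h : ℝ → ℝ} (hh : Continuous h)
    (T : ℝ) : IntegrableOn (fun s => s ^ r * h s) (Ioc 0 T) :=
  ((intervalIntegral.intervalIntegrable_rpow' hr).mul_continuousOn hh.continuousOn).1

theorem antitoneOn_rpow_mul_exp_neg_mul {r c : ℝ} (hr : r ≤ 0) (hc : 0 ≤ c) :
    AntitoneOn (fun s => s ^ r * exp (-(c * s) / 2)) (Ioi 0) := fun s hs t _ hst =>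
  mul_le_mul (rpow_le_rpow_of_nonpos hs hst hr) (exp_le_exp.2 (by nlinarith))
    (exp_nonneg _) (rpow_nonneg hs.le _)

theorem monotone_exp_neg_mul_sub {c : ℝ} (hc : 0 ≤ c) (T : ℝ) :
    Monotone (fun s => exp (-(c * (T - s)) / 2)) := fun s t hst =>
  exp_le_exp.2 (by nlinarith)

theorem exp_neg_mul_sub_mul_exp_neg_mul_le {lam lami T s : ℝ} (hli : lam ≤ lami) (hs : s ≤ T) :
    exp (-(lami * (T - s))) * exp (-(lam * s))
      ≤ exp (-(lam * T) / 2) * (exp (-(lam * s) / 2) * exp (-(lami * (T - s)) / 2)) := by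
  rw [← exp_add, ← exp_add, ← exp_add]
  exact exp_le_exp.2 (by nlinarith [mul_nonneg (sub_nonneg.2 hli) (sub_nonneg.2 hs)])

theorem setIntegral_Ioc_rpow_neg_half_mul_exp_le {lam T : ℝ} (hlam : 0 ≤ lam) (hT : 0 ≤ T) :
    ∫ s in Ioc 0 T, s ^ (-(1/2 : ℝ)) * exp (-(lam * s) / 2) ≤ 2 * T ^ (1/2 : ℝ) := by
  calc ∫ s in Ioc 0 T, s ^ (-(1/2 : ℝ)) * exp (-(lam * s) / 2)
      ≤ ∫ s in Ioc 0 T, s ^ (-(1/2 : ℝ)) := by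
        refine setIntegral_mono_on (integrableOn_Ioc_rpow_mul (by norm_num) (by fun_prop) T)
          (intervalIntegral.intervalIntegrable_rpow' (by norm_num)).1 measurableSet_Ioc
          fun s hs => ?_
        exact mul_le_of_le_one_right (rpow_nonneg hs.1.le _)
          (exp_le_one_iff.2 (by nlinarith [hs.1]))
    _ = 2 * T ^ (1/2 : ℝ) := by rw [setIntegral_Ioc_rpow (by norm_num) hT]; norm_num; ring

theorem setIntegral_exp_mul_exp_mul_rpow_le {lam lami T : ℝ} (hlam : 0 ≤ lam) (hli : lam ≤ lami)
    (hT : 0 < T) :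
    ∫ s in Ioc 0 T, exp (-(lami * (T - s))) * exp (-(lam * s)) * s ^ (-(1/2 : ℝ))
      ≤ exp (-(lam * T) / 2) * (∫ s in Ioc 0 T, exp (-(lami * (T - s)) / 2)) *
          ((1/T) * ∫ s in Ioc 0 T, s ^ (-(1/2 : ℝ)) * exp (-(lam * s) / 2)) := by
  set f := fun s : ℝ => s ^ (-(1/2 : ℝ)) * exp (-(lam * s) / 2)
  set g := fun s : ℝ => exp (-(lami * (T - s)) / 2)
  have hf : IntegrableOn f (Ioc 0 T) := integrableOn_Ioc_rpow_mul (by norm_num) (by fun_prop) T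
  have hg : IntegrableOn g (Ioc 0 T) := (by fun_prop : Continuous g).integrableOn_Ioc
  have hfg : IntegrableOn (fun s => f s * g s) (Ioc 0 T) := by
    simpa only [f, g, mul_assoc] using
      integrableOn_Ioc_rpow_mul (by norm_num : (-1 : ℝ) < -(1/2))
        (by fun_prop : Continuous fun s => exp (-(lam * s) / 2) * g s) T
  have hlhs : IntegrableOn (fun s => exp (-(lami * (T - s))) * exp (-(lam * s)) * s ^ (-(1/2 : ℝ)))
      (Ioc 0 T) := by
    simpa only [mul_comm] using integrableOn_Ioc_rpow_mul (by norm_num : (-1 : ℝ) < -(1/2))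
      (by fun_prop : Continuous fun s => exp (-(lami * (T - s))) * exp (-(lam * s))) T
  have hanti : AntivaryOn f g (Ioc 0 T) :=
    ((antitoneOn_rpow_mul_exp_neg_mul (by norm_num) hlam).mono Ioc_subset_Ioi_self).antivaryOn
      ((monotone_exp_neg_mul_sub (hlam.trans hli) T).monotoneOn _)
  have chebyshev := hanti.measureReal_univ_mul_integral_mul_le
    (ae_restrict_mem measurableSet_Ioc) hf hg hfg
  rw [measureReal_restrict_apply_univ, volume_real_Ioc_of_le hT.le, sub_zero] at chebyshev
  calc ∫ s in Ioc 0 T, exp (-(lami * (T - s))) * exp (-(lam * s)) * s ^ (-(1/2 : ℝ))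
      ≤ ∫ s in Ioc 0 T, exp (-(lam * T) / 2) * (f s * g s) := by
        refine setIntegral_mono_on hlhs (hfg.const_mul _) measurableSet_Ioc fun s hs => ?_
        calc exp (-(lami * (T - s))) * exp (-(lam * s)) * s ^ (-(1/2 : ℝ))
            ≤ exp (-(lam * T) / 2) * (exp (-(lam * s) / 2) * g s) * s ^ (-(1/2 : ℝ)) :=
              mul_le_mul_of_nonneg_right (exp_neg_mul_sub_mul_exp_neg_mul_le hli hs.2)
                (rpow_nonneg hs.1.le _)
          _ = exp (-(lam * T) / 2) * (f s * g s) := by ring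
    _ = exp (-(lam * T) / 2) * ∫ s in Ioc 0 T, f s * g s := integral_const_mul _ _
    _ ≤ exp (-(lam * T) / 2) * ((∫ s in Ioc 0 T, f s) * (∫ s in Ioc 0 T, g s) / T) := by
        gcongr
        rwa [le_div_iff₀ hT, mul_comm]
    _ = _ := by ring

/-- FKG-type estimate: for `λ_i ≥ λ > 0` and `T > 0`,
`∫₀^T e^{-λ_i(T-s)} e^{-λ s} s^{-1/2} ds
  ≤ e^{-λT/2} (∫₀^T e^{-λ_i(T-s)/2} ds) (1/T) ∫₀^T s^{-1/2} e^{-λ s/2} ds`,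
and consequently there is `c > 0` (depending only on `λ`) with
`∫₀^T e^{-λ_i(T-s)} e^{-λ s} s^{-1/2} ds ≤ (c/λ_i) e^{-λT/2} T^{-1/2}`. -/
theorem stmt3 (lam : ℝ) (hlam : 0 < lam) :
    (∀ lami T : ℝ, lam ≤ lami → 0 < T →
      (∫ s in Ioc (0:ℝ) T,
          Real.exp (-(lami * (T - s))) * Real.exp (-(lam * s)) * s ^ (-(1/2 : ℝ)))
        ≤ Real.exp (-(lam * T) / 2) *
            (∫ s in Ioc (0:ℝ) T, Real.exp (-(lami * (T - s)) / 2)) *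
            ((1/T) * ∫ s in Ioc (0:ℝ) T, s ^ (-(1/2 : ℝ)) * Real.exp (-(lam * s) / 2)))
    ∧ ∃ c : ℝ, 0 < c ∧ ∀ lami T : ℝ, lam ≤ lami → 0 < T →
      (∫ s in Ioc (0:ℝ) T,
          Real.exp (-(lami * (T - s))) * Real.exp (-(lam * s)) * s ^ (-(1/2 : ℝ)))
        ≤ (c / lami) * Real.exp (-(lam * T) / 2) * T ^ (-(1/2 : ℝ)) := by
  refine ⟨fun lami T hli hT => setIntegral_exp_mul_exp_mul_rpow_le hlam.le hli hT,
    4, by norm_num, fun lami T hli hT => ?_⟩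
  have hlami : 0 < lami := hlam.trans_le hli
  have hG : ∫ s in Ioc 0 T, exp (-(lami * (T - s)) / 2) ≤ 2 / lami := by
    have halve (s : ℝ) : -(lami * (T - s)) / 2 = -(lami / 2 * (T - s)) := by ring
    simpa only [halve, one_div_div] using
      setIntegral_Ioc_exp_neg_mul_sub_le (half_pos hlami) hT.le
  have hF := setIntegral_Ioc_rpow_neg_half_mul_exp_le hlam.le hT.le
  have hG₀ : 0 ≤ ∫ s in Ioc 0 T, exp (-(lami * (T - s)) / 2) :=
    setIntegral_nonneg measurableSet_Ioc fun _ _ => (exp_pos _).le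
  have hF₀ : 0 ≤ ∫ s in Ioc 0 T, s ^ (-(1/2 : ℝ)) * exp (-(lam * s) / 2) :=
    setIntegral_nonneg measurableSet_Ioc fun s hs =>
      mul_nonneg (rpow_nonneg hs.1.le _) (exp_pos _).le
  have hroot : T ^ (-(1/2 : ℝ)) = T ^ (1/2 : ℝ) / T := by
    rw [← rpow_sub_one hT.ne']; norm_num
  calc _ ≤ exp (-(lam * T) / 2) * (∫ s in Ioc 0 T, exp (-(lami * (T - s)) / 2)) *
          ((1/T) * ∫ s in Ioc 0 T, s ^ (-(1/2 : ℝ)) * exp (-(lam * s) / 2)) :=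
        setIntegral_exp_mul_exp_mul_rpow_le hlam.le hli hT
    _ ≤ exp (-(lam * T) / 2) * (2 / lami) * ((1/T) * (2 * T ^ (1/2 : ℝ))) := by gcongr
    _ = 4 / lami * exp (-(lam * T) / 2) * T ^ (-(1/2 : ℝ)) := by rw [hroot]; ring
end

section
/- Let S be a nonnegative random variable with Laplace transform E[e^{-r S}] = e^{-B(r) t} for all r ≥ 0, where B is a Bernstein function satisfying B(r) ≥ k r^α for all r ≥ λ₁, with constants k, λ₁ > 0 and α ∈ (0,1]. Then for any λ > 0 there exist constants c, c' > 0 such that E[S^{-1/2} e^{-λ S / 2}] ≤ c (min(1/2, t))^{-1/(2α)} e^{-c' t} for all t > 0. -/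
/-!
Since `Γ(a) s^{-a} = ∫₀^∞ u^{a-1} e^{-us} du`, Tonelli turns `Γ(a) E[S^{-a} e^{-cS}]` into
`∫₀^∞ u^{a-1} e^{-B(u+c) t} du`. Monotonicity of `B` gives `2 B(u+c) ≥ B(u) + B(c)`, which
splits off the factor `e^{-B(c) t/2}`. What remains is at most `∫₀^{λ₁} u^{a-1} du` plus the
Gamma integral `∫₀^∞ u^{a-1} e^{-k t u^α/2} du`, a constant times `t^{-a/α}`. The theorem is
the case `a = 1/2`, `c = λ/2`.
-/

open MeasureTheory Real Set

lemma ofReal_Gamma_mul_rpow_neg_le_lintegral {a s : ℝ} (ha : 0 < a) (hs : 0 ≤ s) :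
    ENNReal.ofReal (Gamma a * s ^ (-a)) ≤
      ∫⁻ u in Ioi 0, ENNReal.ofReal (u ^ (a - 1)) * ENNReal.ofReal (exp (-(s * u))) := by
  -- equality for `s > 0`; at `s = 0` the left side vanishes because `0 ^ (-a) = 0`
  rcases hs.eq_or_lt with rfl | hs
  · simp [zero_rpow (neg_ne_zero.2 ha.ne')]
  have h := integral_rpow_mul_exp_neg_mul_Ioi ha hs
  have hint : IntegrableOn (fun u => u ^ (a - 1) * exp (-(s * u))) (Ioi 0) :=
    Integrable.of_integral_ne_zero (by rw [h]; positivity)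
  have hnn : ∀ u ∈ Ioi (0 : ℝ), 0 ≤ u ^ (a - 1) := fun u hu => rpow_nonneg (le_of_lt hu) _
  rw [setLIntegral_congr_fun measurableSet_Ioi fun u hu => (ENNReal.ofReal_mul (hnn u hu)).symm,
    ← ofReal_integral_eq_lintegral_ofReal hint, h, one_div, inv_rpow hs.le, rpow_neg hs.le,
    mul_comm]
  filter_upwards [ae_restrict_mem measurableSet_Ioi] with u hu
  exact mul_nonneg (hnn u hu) (exp_pos _).le

lemma MonotoneOn.apply_add_apply_le_two_mul_apply_add {B : ℝ → ℝ} (hB : MonotoneOn B (Ici 0))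
    {u v : ℝ} (hu : 0 ≤ u) (hv : 0 ≤ v) : B u + B v ≤ 2 * B (u + v) := by
  have huv : u + v ∈ Ici (0 : ℝ) := mem_Ici.2 (add_nonneg hu hv)
  linarith [hB hu huv (le_add_of_nonneg_right hv), hB hv huv (le_add_of_nonneg_left hu)]

lemma lintegral_rpow_mul_le_of_le_exp_neg_rpow {a α l b : ℝ} (ha : 0 < a) (hα : 0 < α)
    (hl : 0 < l) (hb : 0 < b) {g : ℝ → ℝ} (hg_le_one : ∀ u ∈ Ioc 0 l, g u ≤ 1)
    (hg_le_exp : ∀ u, l < u → g u ≤ exp (-b * u ^ α)) :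
    ∫⁻ u in Ioi 0, ENNReal.ofReal (u ^ (a - 1)) * ENNReal.ofReal (g u) ≤
      ENNReal.ofReal (l ^ a / a + b ^ (-a / α) * (1 / α) * Gamma (a / α)) := by
  have hq : -1 < a - 1 := by linarith
  have hnear : ∫ u in Ioc 0 l, u ^ (a - 1) = l ^ a / a := by
    rw [← intervalIntegral.integral_of_le hl.le, integral_rpow (Or.inl hq), sub_add_cancel,
      zero_rpow ha.ne', sub_zero]
  have hfar := integral_rpow_mul_exp_neg_mul_rpow hα hq hb
  rw [sub_add_cancel] at hfar
  rw [← Ioc_union_Ioi_eq_Ioi hl.le, lintegral_union measurableSet_Ioi Ioc_disjoint_Ioi_same,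
    ENNReal.ofReal_add (by positivity) (by positivity)]
  gcongr
  · calc _ ≤ ∫⁻ u in Ioc 0 l, ENNReal.ofReal (u ^ (a - 1)) := by
          refine setLIntegral_mono' measurableSet_Ioc fun u hu => ?_
          exact mul_le_of_le_one_right' (ENNReal.ofReal_le_one.2 (hg_le_one u hu))
      _ = _ := by
          rw [← ofReal_integral_eq_lintegral_ofReal
            (Integrable.of_integral_ne_zero (by rw [hnear]; positivity)), hnear]
          filter_upwards [ae_restrict_mem measurableSet_Ioc] with u hu
          exact rpow_nonneg hu.1.le _
  · calc _ ≤ ∫⁻ u in Ioi l, ENNReal.ofReal (u ^ (a - 1) * exp (-b * u ^ α)) := by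
          refine setLIntegral_mono' measurableSet_Ioi fun u hu => ?_
          rw [ENNReal.ofReal_mul (rpow_nonneg (hl.trans hu).le _)]
          gcongr
          exact hg_le_exp u hu
      _ ≤ ∫⁻ u in Ioi 0, ENNReal.ofReal (u ^ (a - 1) * exp (-b * u ^ α)) :=
          lintegral_mono_set (Ioi_subset_Ioi hl.le)
      _ = _ := by
          rw [← ofReal_integral_eq_lintegral_ofReal
            (Integrable.of_integral_ne_zero (by rw [hfar]; positivity)), hfar]
          filter_upwards [ae_restrict_mem measurableSet_Ioi] with u hu
          exact mul_nonneg (rpow_nonneg (le_of_lt hu) _) (exp_pos _).le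

lemma add_mul_rpow_neg_le_mul_min_rpow_neg {A C t p : ℝ} (hA : 0 ≤ A) (hC : 0 ≤ C)
    (ht : 0 < t) (hp : 0 ≤ p) : A + C * t ^ (-p) ≤ (A + C) * min (1 / 2) t ^ (-p) := by
  have hm : 0 < min (1 / 2) t := lt_min one_half_pos ht
  have hone : 1 ≤ min (1 / 2) t ^ (-p) :=
    one_le_rpow_of_pos_of_le_one_of_nonpos hm ((min_le_left _ _).trans one_half_lt_one.le)
      (neg_nonpos.2 hp)
  have hmono : t ^ (-p) ≤ min (1 / 2) t ^ (-p) :=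
    rpow_le_rpow_of_nonpos hm (min_le_right _ _) (neg_nonpos.2 hp)
  nlinarith [mul_le_mul_of_nonneg_left hmono hC]

section

variable {Ω : Type*} [MeasurableSpace Ω] {μ : Measure Ω} {X : Ω → ℝ} {B : ℝ → ℝ}

lemma aemeasurable_of_integral_exp_neg_ne_zero (h : ∫ ω, exp (-X ω) ∂μ ≠ 0) :
    AEMeasurable X μ := by
  convert (measurable_log.comp_aemeasurable (Integrable.of_integral_ne_zero h).aemeasurable).neg
    using 1
  funext ω
  simp

lemma ofReal_Gamma_mul_lintegral_rpow_neg_mul_exp_le [SFinite μ] (hX : AEMeasurable X μ)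
    (hX0 : ∀ᵐ ω ∂μ, 0 ≤ X ω) {a : ℝ} (ha : 0 < a) (c : ℝ) :
    ENNReal.ofReal (Gamma a) * ∫⁻ ω, ENNReal.ofReal (X ω ^ (-a) * exp (-(c * X ω))) ∂μ ≤
      ∫⁻ u in Ioi 0, ENNReal.ofReal (u ^ (a - 1)) *
        ∫⁻ ω, ENNReal.ofReal (exp (-((u + c) * X ω))) ∂μ := by
  calc _ = ∫⁻ ω, ENNReal.ofReal (Gamma a * X ω ^ (-a)) *
          ENNReal.ofReal (exp (-(c * X ω))) ∂μ := by
        rw [← lintegral_const_mul' _ _ ENNReal.ofReal_ne_top]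
        refine lintegral_congr_ae ?_
        filter_upwards [hX0] with ω hω
        rw [← ENNReal.ofReal_mul (Gamma_pos_of_pos ha).le,
          ← ENNReal.ofReal_mul (by positivity), mul_assoc]
    _ ≤ ∫⁻ ω, (∫⁻ u in Ioi 0, ENNReal.ofReal (u ^ (a - 1)) *
          ENNReal.ofReal (exp (-(X ω * u))) * ENNReal.ofReal (exp (-(c * X ω)))) ∂μ := by
        refine lintegral_mono_ae ?_
        filter_upwards [hX0] with ω hω
        rw [lintegral_mul_const' _ _ ENNReal.ofReal_ne_top]
        gcongr
        exact ofReal_Gamma_mul_rpow_neg_le_lintegral ha hω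
    _ = ∫⁻ u in Ioi 0, ∫⁻ ω, ENNReal.ofReal (u ^ (a - 1)) *
          ENNReal.ofReal (exp (-((u + c) * X ω))) ∂μ := by
        rw [lintegral_lintegral_swap]
        · refine lintegral_congr fun u => lintegral_congr fun ω => ?_
          rw [mul_assoc, ← ENNReal.ofReal_mul (exp_pos _).le, ← exp_add]
          ring_nf
        · have hm : Measurable fun p : ℝ × ℝ => ENNReal.ofReal (p.2 ^ (a - 1)) *
              ENNReal.ofReal (exp (-(p.1 * p.2))) * ENNReal.ofReal (exp (-(c * p.1))) := by
            fun_prop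
          have hg : AEMeasurable (fun z : Ω × ℝ => (X z.1, z.2))
              (μ.prod (volume.restrict (Ioi 0))) :=
            hX.comp_fst.prodMk measurable_snd.aemeasurable
          exact (hm.comp_aemeasurable hg :)
    _ = _ := by simp_rw [lintegral_const_mul' _ _ ENNReal.ofReal_ne_top]

lemma lintegral_ofReal_exp_neg_add_mul_le {t : ℝ} (ht : 0 ≤ t) (hB : MonotoneOn B (Ici 0))
    (hLap : ∀ r, 0 ≤ r → ∫ ω, exp (-(r * X ω)) ∂μ = exp (-(B r * t)))
    {u v : ℝ} (hu : 0 ≤ u) (hv : 0 ≤ v) :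
    ∫⁻ ω, ENNReal.ofReal (exp (-((u + v) * X ω))) ∂μ ≤
      ENNReal.ofReal (exp (-(B v * t) / 2)) * ENNReal.ofReal (exp (-(B u * t) / 2)) := by
  have huv : 0 ≤ u + v := add_nonneg hu hv
  have hint : Integrable (fun ω => exp (-((u + v) * X ω))) μ :=
    Integrable.of_integral_ne_zero (by rw [hLap _ huv]; positivity)
  rw [← ofReal_integral_eq_lintegral_ofReal hint (ae_of_all _ fun ω => (exp_pos _).le),
    hLap _ huv, ← ENNReal.ofReal_mul (exp_pos _).le, ← exp_add]
  gcongr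
  nlinarith [hB.apply_add_apply_le_two_mul_apply_add hu hv]

lemma lintegral_rpow_neg_mul_exp_le_of_laplace [SFinite μ] {a c t k l α : ℝ} (ha : 0 < a)
    (hc : 0 ≤ c) (ht : 0 < t) (hk : 0 < k) (hl : 0 < l) (hα : 0 < α) (hX : AEMeasurable X μ)
    (hX0 : ∀ᵐ ω ∂μ, 0 ≤ X ω) (hB_nonneg : ∀ r, 0 < r → 0 ≤ B r)
    (hBmono : MonotoneOn B (Ici 0)) (hBlow : ∀ r, l ≤ r → k * r ^ α ≤ B r)
    (hLap : ∀ r, 0 ≤ r → ∫ ω, exp (-(r * X ω)) ∂μ = exp (-(B r * t))) :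
    ENNReal.ofReal (Gamma a) * ∫⁻ ω, ENNReal.ofReal (X ω ^ (-a) * exp (-(c * X ω))) ∂μ ≤
      ENNReal.ofReal (exp (-(B c * t) / 2)) *
        ENNReal.ofReal (l ^ a / a + (k * t / 2) ^ (-a / α) * (1 / α) * Gamma (a / α)) := by
  calc _ ≤ ∫⁻ u in Ioi 0, ENNReal.ofReal (u ^ (a - 1)) *
          ∫⁻ ω, ENNReal.ofReal (exp (-((u + c) * X ω))) ∂μ :=
        ofReal_Gamma_mul_lintegral_rpow_neg_mul_exp_le hX hX0 ha c
    _ ≤ ∫⁻ u in Ioi 0, ENNReal.ofReal (u ^ (a - 1)) *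
          (ENNReal.ofReal (exp (-(B c * t) / 2)) * ENNReal.ofReal (exp (-(B u * t) / 2))) := by
        refine setLIntegral_mono' measurableSet_Ioi fun u hu => ?_
        gcongr
        exact lintegral_ofReal_exp_neg_add_mul_le ht.le hBmono hLap (le_of_lt hu) hc
    _ = ENNReal.ofReal (exp (-(B c * t) / 2)) * ∫⁻ u in Ioi 0,
          ENNReal.ofReal (u ^ (a - 1)) * ENNReal.ofReal (exp (-(B u * t) / 2)) := by
        rw [← lintegral_const_mul' _ _ ENNReal.ofReal_ne_top]
        simp_rw [mul_left_comm]
    _ ≤ _ := by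
        gcongr
        refine lintegral_rpow_mul_le_of_le_exp_neg_rpow ha hα hl (by positivity)
          (fun u hu => exp_le_one_iff.2 ?_) (fun u hu => exp_le_exp.2 ?_)
        · nlinarith [hB_nonneg u hu.1]
        · nlinarith [hBlow u hu.le]

lemma Gamma_mul_integral_rpow_neg_mul_exp_le_of_laplace [SFinite μ] {a c t k l α : ℝ}
    (ha : 0 < a) (hc : 0 ≤ c) (ht : 0 < t) (hk : 0 < k) (hl : 0 < l) (hα : 0 < α)
    (hX0 : ∀ᵐ ω ∂μ, 0 ≤ X ω) (hB_nonneg : ∀ r, 0 < r → 0 ≤ B r)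
    (hBmono : MonotoneOn B (Ici 0)) (hBlow : ∀ r, l ≤ r → k * r ^ α ≤ B r)
    (hLap : ∀ r, 0 ≤ r → ∫ ω, exp (-(r * X ω)) ∂μ = exp (-(B r * t))) :
    Gamma a * ∫ ω, X ω ^ (-a) * exp (-(c * X ω)) ∂μ ≤ exp (-(B c * t) / 2) *
      (l ^ a / a + (k / 2) ^ (-(a / α)) * (1 / α) * Gamma (a / α) * t ^ (-(a / α))) := by
  have hX : AEMeasurable X μ := aemeasurable_of_integral_exp_neg_ne_zero (by
    simpa using (hLap 1 zero_le_one).trans_ne (exp_pos _).ne')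
  have hnn : 0 ≤ᵐ[μ] fun ω => X ω ^ (-a) * exp (-(c * X ω)) := by
    filter_upwards [hX0] with ω hω using by positivity
  rw [integral_eq_lintegral_of_nonneg_ae hnn (by fun_prop),
    ← ENNReal.toReal_ofReal (Gamma_pos_of_pos ha).le, ← ENNReal.toReal_mul]
  refine ENNReal.toReal_le_of_le_ofReal (by positivity) ?_
  rw [ENNReal.ofReal_mul (exp_pos _).le]
  convert lintegral_rpow_neg_mul_exp_le_of_laplace ha hc ht hk hl hα hX hX0 hB_nonneg hBmono
    hBlow hLap using 3
  rw [show k * t / 2 = k / 2 * t by ring, mul_rpow (by positivity) ht.le, neg_div]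
  ring

end

theorem stmt4_general {Ω : Type*} [MeasureSpace Ω] [IsProbabilityMeasure (volume : Measure Ω)]
    (S : ℝ → Ω → ℝ) (B : ℝ → ℝ) (k lam₁ α : ℝ)
    (hk : 0 < k) (hlam₁ : 0 < lam₁) (hα : 0 < α)
    (hBpos : ∀ r : ℝ, 0 < r → 0 < B r)
    (hBmono : MonotoneOn B (Set.Ici (0:ℝ)))
    (hSnn : ∀ t : ℝ, 0 < t → ∀ ω, 0 ≤ S t ω)
    (hLap : ∀ t : ℝ, 0 < t → ∀ r : ℝ, 0 ≤ r →
      (∫ ω, Real.exp (-(r * S t ω))) = Real.exp (-(B r * t)))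
    (hBlow : ∀ r : ℝ, lam₁ ≤ r → k * r ^ α ≤ B r) :
    ∀ lam : ℝ, 0 < lam → ∃ c c' : ℝ, 0 < c ∧ 0 < c' ∧ ∀ t : ℝ, 0 < t →
      (∫ ω, (S t ω) ^ (-(1/2 : ℝ)) * Real.exp (-(lam * S t ω) / 2))
        ≤ c * (min (1/2) t) ^ (-(1/(2*α))) * Real.exp (-(c' * t)) := by
  intro lam hlam
  have hΓ : 0 < Gamma (1 / 2) := Gamma_pos_of_pos one_half_pos
  set A := lam₁ ^ (1 / 2 : ℝ) / (1 / 2)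
  set K := (k / 2) ^ (-(1 / 2 / α)) * (1 / α) * Gamma (1 / 2 / α)
  refine ⟨(A + K) / Gamma (1 / 2), B (lam / 2) / 2, by positivity,
    by linarith [hBpos _ (half_pos hlam)], fun t ht => ?_⟩
  have hbound := Gamma_mul_integral_rpow_neg_mul_exp_le_of_laplace one_half_pos
    (half_pos hlam).le ht hk hlam₁ hα (ae_of_all _ (hSnn t ht)) (fun r hr => (hBpos r hr).le)
    hBmono hBlow (hLap t ht)
  have hmin := add_mul_rpow_neg_le_mul_min_rpow_neg (t := t) (by positivity : 0 ≤ A)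
    (by positivity : 0 ≤ K) ht (by positivity : 0 ≤ 1 / 2 / α)
  simp_rw [show ∀ x : ℝ, -(lam * x) / 2 = -(lam / 2 * x) from fun x => by ring,
    show 1 / (2 * α) = 1 / 2 / α by ring,
    show -(B (lam / 2) / 2 * t) = -(B (lam / 2) * t) / 2 by ring]
  calc _ ≤ exp (-(B (lam / 2) * t) / 2) * (A + K * t ^ (-(1 / 2 / α))) / Gamma (1 / 2) := by
        rw [le_div_iff₀' hΓ]
        exact hbound
    _ ≤ exp (-(B (lam / 2) * t) / 2) * ((A + K) * min (1 / 2) t ^ (-(1 / 2 / α))) /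
          Gamma (1 / 2) := by
        gcongr
    _ = _ := by ring

/-- Subordinator moment bound: if `S_t ≥ 0` has Laplace transform
`E[e^{-r S_t}] = e^{-B(r) t}`, where `B` is a Bernstein function with `B(0)=0`, `B > 0` on
`(0,∞)`, nondecreasing and concave on `[0,∞)`, satisfying `B(r) ≥ k r^α` for `r ≥ λ₁`,
then for any `λ > 0` there are `c, c' > 0` with
`E[S_t^{-1/2} e^{-λ S_t/2}] ≤ c (min(1/2,t))^{-1/(2α)} e^{-c' t}` for all `t > 0`. -/
theorem stmt4 {Ω : Type*} [MeasureSpace Ω] [IsProbabilityMeasure (volume : Measure Ω)]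
    (S : ℝ → Ω → ℝ) (B : ℝ → ℝ) (k lam₁ α : ℝ)
    (hk : 0 < k) (hlam₁ : 0 < lam₁) (hα : 0 < α) (hα1 : α ≤ 1)
    (hB0 : B 0 = 0) (hBpos : ∀ r : ℝ, 0 < r → 0 < B r)
    (hBmono : MonotoneOn B (Set.Ici (0:ℝ))) (hBconc : ConcaveOn ℝ (Set.Ici (0:ℝ)) B)
    (hSnn : ∀ t : ℝ, 0 < t → ∀ ω, 0 ≤ S t ω)
    (hLap : ∀ t : ℝ, 0 < t → ∀ r : ℝ, 0 ≤ r →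
      (∫ ω, Real.exp (-(r * S t ω))) = Real.exp (-(B r * t)))
    (hBlow : ∀ r : ℝ, lam₁ ≤ r → k * r ^ α ≤ B r) :
    ∀ lam : ℝ, 0 < lam → ∃ c c' : ℝ, 0 < c ∧ 0 < c' ∧ ∀ t : ℝ, 0 < t →
      (∫ ω, (S t ω) ^ (-(1/2 : ℝ)) * Real.exp (-(lam * S t ω) / 2))
        ≤ c * (min (1/2) t) ^ (-(1/(2*α))) * Real.exp (-(c' * t)) :=
  stmt4_general S B k lam₁ α hk hlam₁ hα hBpos hBmono hSnn hLap hBlow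
end

section
/- Let S be a nonnegative random variable with E[e^{-r S}] = e^{-B(r) t} for all r ≥ 0, where B is a Bernstein function with B(0) = 0, B(r) > 0 for r > 0, and B(r) ≥ k r^α for r ≥ λ₁ (k, λ₁ > 0, α ∈ (0,1]). Then for any d > 0 there exists c > 0 such that E[S^{-d}] ≤ c (min(1,t))^{-d/α} for all t > 0. -/
/-!
Since `Γ(d) x^{-d} = ∫₀^∞ r^{d-1} e^{-rx} dr`, Tonelli's theorem and the Laplace transform give
`Γ(d) E[S_t^{-d}] ≤ ∫₀^∞ r^{d-1} e^{-B(r) t} dr`. Split this integral at `λ₁`: on `(0, λ₁]` bound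
`e^{-B(r) t} ≤ 1`, which gives `λ₁^d / d`; on `(λ₁, ∞)` use `B(r) ≥ k r^α`, which leaves the Gamma
integral `(k t)^{-d/α} Γ(d/α) / α`. Both terms are bounded by multiples of `min(1, t)^{-d/α}`.
-/

open MeasureTheory Set Real
open scoped ENNReal

theorem lintegral_rpow_mul_exp_neg_mul_rpow {p q b : ℝ} (hp : 0 < p) (hq : -1 < q) (hb : 0 < b) :
    ∫⁻ x in Ioi 0, ENNReal.ofReal (x ^ q * exp (-b * x ^ p)) =
      ENNReal.ofReal (b ^ (-(q + 1) / p) * (1 / p) * Gamma ((q + 1) / p)) := by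
  rw [← integral_rpow_mul_exp_neg_mul_rpow hp hq hb,
    ofReal_integral_eq_lintegral_ofReal (integrableOn_rpow_mul_exp_neg_mul_rpow hq hp hb)
      (ae_restrict_of_forall_mem measurableSet_Ioi fun x hx =>
        mul_nonneg (rpow_nonneg (le_of_lt hx) _) (exp_pos _).le)]

theorem lintegral_Ioc_rpow {a d : ℝ} (ha : 0 ≤ a) (hd : 0 < d) :
    ∫⁻ r in Ioc 0 a, ENNReal.ofReal (r ^ (d - 1)) = ENNReal.ofReal (a ^ d / d) := by
  have hd1 : -1 < d - 1 := by linarith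
  have hint : IntegrableOn (fun r : ℝ => r ^ (d - 1)) (Ioc 0 a) :=
    (intervalIntegrable_iff_integrableOn_Ioc_of_le ha).mp
      (intervalIntegral.intervalIntegrable_rpow' hd1)
  rw [← ofReal_integral_eq_lintegral_ofReal hint
    (ae_restrict_of_forall_mem measurableSet_Ioc fun r hr => rpow_nonneg hr.1.le _),
    ← intervalIntegral.integral_of_le ha, integral_rpow (Or.inl hd1), sub_add_cancel,
    zero_rpow hd.ne', sub_zero]

-- An equality for `0 < x`; at `x = 0` the left side is `0` by the convention `0 ^ (-d) = 0`.
theorem ofReal_gamma_mul_rpow_neg_le_lintegral {d x : ℝ} (hd : 0 < d) (hx : 0 ≤ x) :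
    ENNReal.ofReal (Gamma d * x ^ (-d)) ≤
      ∫⁻ r in Ioi 0, ENNReal.ofReal (r ^ (d - 1) * exp (-(r * x))) := by
  rcases hx.eq_or_lt with rfl | hx
  · simp [zero_rpow (neg_ne_zero.mpr hd.ne')]
  refine le_of_eq ?_
  have h := lintegral_rpow_mul_exp_neg_mul_rpow one_pos (by linarith : -1 < d - 1) hx
  simp only [rpow_one, sub_add_cancel, div_one, mul_one, neg_mul, mul_comm x] at h
  rw [h, mul_comm]

theorem integral_rpow_neg_le_of_lintegral_laplace_le {Ω : Type*} [MeasurableSpace Ω]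
    {μ : Measure Ω} [SFinite μ] {X : Ω → ℝ} {d C : ℝ} (hX : AEMeasurable X μ)
    (hX0 : ∀ ω, 0 ≤ X ω) (hd : 0 < d) (hC : 0 ≤ C)
    (hexp : ∀ r, 0 < r → Integrable (fun ω => exp (-(r * X ω))) μ)
    (hlap : ∫⁻ r in Ioi 0, ENNReal.ofReal (r ^ (d - 1) * ∫ ω, exp (-(r * X ω)) ∂μ)
      ≤ ENNReal.ofReal C) :
    ∫ ω, X ω ^ (-d) ∂μ ≤ C / Gamma d := by
  have hΓ : 0 < Gamma d := Gamma_pos_of_pos hd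
  set K : Ω → ℝ → ℝ≥0∞ := fun ω r => ENNReal.ofReal (r ^ (d - 1) * exp (-(r * X ω)))
  have hK : AEMeasurable (Function.uncurry K) (μ.prod (volume.restrict (Ioi 0))) := by
    have hX1 : AEMeasurable (fun z : Ω × ℝ => X z.1) (μ.prod (volume.restrict (Ioi 0))) :=
      hX.comp_quasiMeasurePreserving Measure.quasiMeasurePreserving_fst
    unfold K Function.uncurry
    fun_prop
  have hinner : ∀ r ∈ Ioi (0 : ℝ), ∫⁻ ω, K ω r ∂μ
      = ENNReal.ofReal (r ^ (d - 1) * ∫ ω, exp (-(r * X ω)) ∂μ) := by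
    intro r hr
    simp only [K, ENNReal.ofReal_mul (rpow_nonneg (le_of_lt hr) _)]
    rw [lintegral_const_mul' _ _ ENNReal.ofReal_ne_top,
      ofReal_integral_eq_lintegral_ofReal (hexp r hr)
        (ae_of_all _ fun ω => (exp_pos _).le)]
  have hmoment : ENNReal.ofReal (Gamma d) * ∫⁻ ω, ENNReal.ofReal (X ω ^ (-d)) ∂μ
      ≤ ENNReal.ofReal C := calc
    _ = ∫⁻ ω, ENNReal.ofReal (Gamma d * X ω ^ (-d)) ∂μ := by
      rw [← lintegral_const_mul' _ _ ENNReal.ofReal_ne_top]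
      simp only [ENNReal.ofReal_mul hΓ.le]
    _ ≤ ∫⁻ ω, (∫⁻ r in Ioi 0, K ω r) ∂μ :=
      lintegral_mono fun ω => ofReal_gamma_mul_rpow_neg_le_lintegral hd (hX0 ω)
    _ = ∫⁻ r in Ioi 0, ∫⁻ ω, K ω r ∂μ := lintegral_lintegral_swap hK
    _ ≤ ENNReal.ofReal C := by rwa [setLIntegral_congr_fun measurableSet_Ioi hinner]
  have hmoment' : ∫⁻ ω, ENNReal.ofReal (X ω ^ (-d)) ∂μ ≤ ENNReal.ofReal (C / Gamma d) := by
    rw [ENNReal.ofReal_div_of_pos hΓ]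
    exact ENNReal.le_div_iff_mul_le (Or.inl (by simpa using hΓ)) (Or.inl ENNReal.ofReal_ne_top)
      |>.mpr (by rwa [mul_comm])
  rw [integral_eq_lintegral_of_nonneg_ae (ae_of_all _ fun ω => rpow_nonneg (hX0 ω) _)
    (hX.pow_const _).aestronglyMeasurable]
  exact ENNReal.toReal_le_of_le_ofReal (div_nonneg hC hΓ.le) hmoment'

theorem lintegral_rpow_mul_exp_neg_mul_le {B : ℝ → ℝ} {k lam α d t : ℝ} (hk : 0 < k)
    (hlam : 0 < lam) (hα : 0 < α) (hd : 0 < d) (ht : 0 < t)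
    (hBpos : ∀ r, 0 < r → 0 < B r) (hBlow : ∀ r, lam ≤ r → k * r ^ α ≤ B r) :
    ∫⁻ r in Ioi 0, ENNReal.ofReal (r ^ (d - 1) * exp (-(B r * t))) ≤
      ENNReal.ofReal (lam ^ d / d + (k * t) ^ (-(d / α)) * (1 / α) * Gamma (d / α)) := by
  rw [← Ioc_union_Ioi_eq_Ioi hlam.le, lintegral_union measurableSet_Ioi Ioc_disjoint_Ioi_same,
    ENNReal.ofReal_add (by positivity) (by positivity)]
  gcongr
  · calc ∫⁻ r in Ioc 0 lam, ENNReal.ofReal (r ^ (d - 1) * exp (-(B r * t)))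
        ≤ ∫⁻ r in Ioc 0 lam, ENNReal.ofReal (r ^ (d - 1)) := by
          refine setLIntegral_mono (by fun_prop) fun r hr => ENNReal.ofReal_le_ofReal ?_
          refine mul_le_of_le_one_right (rpow_nonneg hr.1.le _) (exp_le_one_iff.mpr ?_)
          nlinarith [hBpos r hr.1]
      _ = ENNReal.ofReal (lam ^ d / d) := lintegral_Ioc_rpow hlam.le hd
  · calc ∫⁻ r in Ioi lam, ENNReal.ofReal (r ^ (d - 1) * exp (-(B r * t)))
        ≤ ∫⁻ r in Ioi lam, ENNReal.ofReal (r ^ (d - 1) * exp (-(k * t) * r ^ α)) := by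
          refine setLIntegral_mono (by fun_prop) fun r hr => ENNReal.ofReal_le_ofReal ?_
          have hr0 : 0 < r := hlam.trans hr
          gcongr
          nlinarith [hBlow r hr.le]
      _ ≤ ∫⁻ r in Ioi 0, ENNReal.ofReal (r ^ (d - 1) * exp (-(k * t) * r ^ α)) :=
          lintegral_mono_set (Ioi_subset_Ioi hlam.le)
      _ = ENNReal.ofReal ((k * t) ^ (-(d / α)) * (1 / α) * Gamma (d / α)) := by
          rw [lintegral_rpow_mul_exp_neg_mul_rpow hα (by linarith) (by positivity),
            sub_add_cancel, neg_div]

theorem aemeasurable_of_integrable_exp_neg {Ω : Type*} [MeasurableSpace Ω] {μ : Measure Ω}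
    {X : Ω → ℝ} (h : Integrable (fun ω => exp (-X ω)) μ) : AEMeasurable X μ := by
  refine (measurable_log.comp_aemeasurable h.aemeasurable).neg.congr (ae_of_all _ fun ω => ?_)
  simp

theorem stmt5_general {Ω : Type*} [MeasureSpace Ω] [IsProbabilityMeasure (volume : Measure Ω)]
    (S : ℝ → Ω → ℝ) (B : ℝ → ℝ) (k lam₁ α : ℝ)
    (hk : 0 < k) (hlam₁ : 0 < lam₁) (hα : 0 < α)
    (hBpos : ∀ r : ℝ, 0 < r → 0 < B r)
    (hSnn : ∀ t : ℝ, 0 < t → ∀ ω, 0 ≤ S t ω)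
    (hLap : ∀ t : ℝ, 0 < t → ∀ r : ℝ, 0 ≤ r →
      (∫ ω, Real.exp (-(r * S t ω))) = Real.exp (-(B r * t)))
    (hBlow : ∀ r : ℝ, lam₁ ≤ r → k * r ^ α ≤ B r) :
    ∀ d : ℝ, 0 < d → ∃ c : ℝ, 0 < c ∧ ∀ t : ℝ, 0 < t →
      (∫ ω, (S t ω) ^ (-d)) ≤ c * (min 1 t) ^ (-(d/α)) := by
  intro d hd
  set β := d / α
  set M := lam₁ ^ d / d + k ^ (-β) * (1 / α) * Gamma β
  have hΓ : 0 < Gamma d := Gamma_pos_of_pos hd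
  refine ⟨M / Gamma d, by positivity, fun t ht => ?_⟩
  have hexp : ∀ r, 0 ≤ r → Integrable (fun ω => exp (-(r * S t ω))) :=
    fun r hr => .of_integral_ne_zero (by rw [hLap t ht r hr]; exact (exp_pos _).ne')
  have hlap : ∫⁻ r in Ioi 0, ENNReal.ofReal (r ^ (d - 1) * ∫ ω, exp (-(r * S t ω)))
      ≤ ENNReal.ofReal (lam₁ ^ d / d + (k * t) ^ (-β) * (1 / α) * Gamma β) := by
    rw [setLIntegral_congr_fun measurableSet_Ioi fun r hr => by rw [hLap t ht r (le_of_lt hr)]]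
    exact lintegral_rpow_mul_exp_neg_mul_le hk hlam₁ hα hd ht hBpos hBlow
  have hs : 0 < min 1 t := lt_min one_pos ht
  have hβ : -β ≤ 0 := neg_nonpos.mpr (div_pos hd hα).le
  calc ∫ ω, S t ω ^ (-d)
      ≤ (lam₁ ^ d / d + (k * t) ^ (-β) * (1 / α) * Gamma β) / Gamma d :=
        integral_rpow_neg_le_of_lintegral_laplace_le
          (aemeasurable_of_integrable_exp_neg (by simpa using hexp 1 zero_le_one))
          (hSnn t ht) hd (by positivity) (fun r hr => hexp r hr.le) hlap
    _ ≤ M * min 1 t ^ (-β) / Gamma d := by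
        rw [mul_rpow hk.le ht.le]
        gcongr
        have h1 : 1 ≤ min 1 t ^ (-β) := one_le_rpow_of_pos_of_le_one_of_nonpos hs (min_le_left _ _) hβ
        have h2 : t ^ (-β) ≤ min 1 t ^ (-β) := rpow_le_rpow_of_nonpos hs (min_le_right _ _) hβ
        have hM₁ : 0 ≤ lam₁ ^ d / d := by positivity
        have hM₂ : 0 ≤ k ^ (-β) * (1 / α) * Gamma β := by positivity
        nlinarith [mul_le_mul_of_nonneg_left h1 hM₁, mul_le_mul_of_nonneg_left h2 hM₂]
    _ = M / Gamma d * min 1 t ^ (-β) := by ring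

/-- Negative moments of a subordinator: if `S_t ≥ 0` has Laplace transform
`E[e^{-r S_t}] = e^{-B(r)t}` with `B` a Bernstein function, `B(0)=0`, `B>0` on `(0,∞)`,
nondecreasing and concave, and `B(r) ≥ k r^α` for `r ≥ λ₁`, then for any `d > 0`
there is `c > 0` such that `E[S_t^{-d}] ≤ c (min(1,t))^{-d/α}` for all `t > 0`. -/
theorem stmt5 {Ω : Type*} [MeasureSpace Ω] [IsProbabilityMeasure (volume : Measure Ω)]
    (S : ℝ → Ω → ℝ) (B : ℝ → ℝ) (k lam₁ α : ℝ)
    (hk : 0 < k) (hlam₁ : 0 < lam₁) (hα : 0 < α) (hα1 : α ≤ 1)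
    (hB0 : B 0 = 0) (hBpos : ∀ r : ℝ, 0 < r → 0 < B r)
    (hBmono : MonotoneOn B (Set.Ici (0:ℝ))) (hBconc : ConcaveOn ℝ (Set.Ici (0:ℝ)) B)
    (hSnn : ∀ t : ℝ, 0 < t → ∀ ω, 0 ≤ S t ω)
    (hLap : ∀ t : ℝ, 0 < t → ∀ r : ℝ, 0 ≤ r →
      (∫ ω, Real.exp (-(r * S t ω))) = Real.exp (-(B r * t)))
    (hBlow : ∀ r : ℝ, lam₁ ≤ r → k * r ^ α ≤ B r) :
    ∀ d : ℝ, 0 < d → ∃ c : ℝ, 0 < c ∧ ∀ t : ℝ, 0 < t →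
      (∫ ω, (S t ω) ^ (-d)) ≤ c * (min 1 t) ^ (-(d/α)) :=
  stmt5_general S B k lam₁ α hk hlam₁ hα hBpos hSnn hLap hBlow
end

section
/- Let c, c' > 0 and a₀ > 1. There exist constants a₃, a₄ > 0 such that for all r ∈ (0,1], ∑_{i=1}^∞ e^{-2 r c' i^{1/(1+α')}} ( c i^{-1} − c'' i^{-a₀} ) ≥ a₃ log(1 + r^{-1}) − a₄, for any fixed c'' ≥ 0, where α' ≥ 0 is a fixed parameter (so the exponent 1/(1+α') ∈ (0,1]). -/
open Real Finset

/-- Logarithmic lower bound for the critical series: for `c, c' > 0`, `a₀ > 1`,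
`α' ≥ 0` and fixed `c'' ≥ 0`, there are `a₃, a₄ > 0` such that for all `r ∈ (0,1]`,
`∑_{i≥1} e^{-2rc' i^{1/(1+α')}} (c i^{-1} − c'' i^{-a₀}) ≥ a₃ log(1+r⁻¹) − a₄`. -/
theorem stmt15 (c c' a₀ α' c'' : ℝ) (hc : 0 < c) (hc' : 0 < c') (ha₀ : 1 < a₀)
    (hα' : 0 ≤ α') (hc'' : 0 ≤ c'') :
    ∃ a₃ a₄ : ℝ, 0 < a₃ ∧ 0 < a₄ ∧ ∀ r : ℝ, 0 < r → r ≤ 1 →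
      a₃ * Real.log (1 + r⁻¹) - a₄ ≤
        ∑' i : ℕ, Real.exp (-(2 * r * c' * ((i : ℝ) + 1) ^ (1/(1+α')))) *
          (c * ((i : ℝ) + 1)⁻¹ - c'' * ((i : ℝ) + 1) ^ (-a₀)) := by
  have h1α : (0:ℝ) < 1 + α' := by linarith
  set β : ℝ := 1/(1+α') with hβdef
  have hβ0 : 0 < β := by positivity
  have hβ1 : β ≤ 1 := by rw [hβdef, div_le_one h1α]; linarith
  -- summability of the a₀-part
  have Sa : Summable (fun n : ℕ => ((n:ℝ)+1) ^ (-a₀)) := by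
    have h1 : Summable (fun n : ℕ => ((n:ℝ)) ^ (-a₀)) :=
      Real.summable_nat_rpow.mpr (by linarith)
    have h2 := (summable_nat_add_iff 1).mpr h1
    refine h2.congr fun n => ?_
    push_cast
    ring_nf
  set C : ℝ := ∑' n : ℕ, c'' * ((n:ℝ)+1)^(-a₀) with hCdef
  have hC0 : 0 ≤ C := tsum_nonneg fun n => by positivity
  set a₃ : ℝ := c * Real.exp (-(2*c')) with ha₃def
  have ha₃ : 0 < a₃ := by positivity
  refine ⟨a₃, a₃ * Real.log 2 + C + 1, ha₃, by positivity, ?_⟩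
  intro r hr hr1
  set t : ℝ := 2*r*c' with htdef
  have ht0 : 0 < t := by positivity
  set g : ℕ → ℝ := fun i => Real.exp (-(t * ((i:ℝ)+1)^β)) * (c * ((i:ℝ)+1)⁻¹) with hgdef
  set h : ℕ → ℝ := fun i => Real.exp (-(t * ((i:ℝ)+1)^β)) * (c'' * ((i:ℝ)+1)^(-a₀)) with hhdef
  have hx1 : ∀ i : ℕ, (1:ℝ) ≤ (i:ℝ)+1 := fun i => by
    have := Nat.cast_nonneg (α := ℝ) i; linarith
  have hx0 : ∀ i : ℕ, (0:ℝ) < (i:ℝ)+1 := fun i => by positivity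
  -- exponential decay bound
  set m : ℕ := ⌈2/β⌉₊ with hmdef
  have hmβ : 2 ≤ (m:ℝ) * β := by
    have := Nat.le_ceil (2/β)
    calc (2:ℝ) = (2/β) * β := by field_simp
    _ ≤ (m:ℝ) * β := by gcongr
  have key : ∀ i : ℕ, Real.exp (-(t * ((i:ℝ)+1)^β)) ≤
      (m.factorial / t^m) * (((i:ℝ)+1)^2)⁻¹ := by
    intro i
    have hxb0 : (0:ℝ) < ((i:ℝ)+1)^β := Real.rpow_pos_of_pos (hx0 i) _
    have h2 : ((i:ℝ)+1)^(2:ℕ) ≤ (((i:ℝ)+1)^β)^m := by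
      rw [← Real.rpow_natCast (((i:ℝ)+1)^β) m, ← Real.rpow_mul (hx0 i).le,
        ← Real.rpow_natCast ((i:ℝ)+1) 2]
      exact Real.rpow_le_rpow_of_exponent_le (hx1 i) (by push_cast; linarith [hmβ])
    have hexp : t^m * ((i:ℝ)+1)^(2:ℕ) / m.factorial ≤ Real.exp (t * ((i:ℝ)+1)^β) := by
      have step1 : t^m * ((i:ℝ)+1)^(2:ℕ) / m.factorial
          ≤ t^m * (((i:ℝ)+1)^β)^m / m.factorial := by
        gcongr
      have step2 : t^m * (((i:ℝ)+1)^β)^m / m.factorial ≤ Real.exp (t * ((i:ℝ)+1)^β) := by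
        rw [← mul_pow]
        exact Real.pow_div_factorial_le_exp _ (by positivity) m
      linarith
    have hpos : (0:ℝ) < t^m * ((i:ℝ)+1)^(2:ℕ) / m.factorial := by positivity
    rw [Real.exp_neg]
    have hinv : (Real.exp (t * ((i:ℝ)+1)^β))⁻¹
        ≤ (t^m * ((i:ℝ)+1)^(2:ℕ) / m.factorial)⁻¹ := inv_anti₀ hpos hexp
    have heq : (t^m * ((i:ℝ)+1)^(2:ℕ) / m.factorial)⁻¹
        = (m.factorial / t^m) * (((i:ℝ)+1)^2)⁻¹ := by
      field_simp
    rw [heq] at hinv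
    exact hinv
  have Sg : Summable g := by
    have hcomp : Summable (fun i : ℕ => (c * (m.factorial / t^m)) * (((i:ℝ)+1)^2)⁻¹) := by
      have h1 : Summable (fun n : ℕ => (((n:ℝ))^2)⁻¹) := by
        simpa [one_div] using Real.summable_one_div_nat_pow.mpr (le_refl 2)
      have h2 := (summable_nat_add_iff 1).mpr h1
      have h3 : Summable (fun n : ℕ => (((n:ℝ)+1)^2)⁻¹) := by
        refine h2.congr fun n => ?_
        push_cast
        ring_nf
      exact h3.mul_left _
    refine Summable.of_nonneg_of_le (fun i => by positivity) (fun i => ?_) hcomp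
    · have hinv : ((i:ℝ)+1)⁻¹ ≤ 1 := by
        rw [inv_le_one_iff₀]; right; exact hx1 i
      calc g i ≤ ((m.factorial / t^m) * (((i:ℝ)+1)^2)⁻¹) * (c * ((i:ℝ)+1)⁻¹) := by
            apply mul_le_mul_of_nonneg_right (key i) (by positivity)
        _ ≤ ((m.factorial / t^m) * (((i:ℝ)+1)^2)⁻¹) * (c * 1) := by
            gcongr
        _ = (c * (m.factorial / t^m)) * (((i:ℝ)+1)^2)⁻¹ := by ring
  have hbound : ∀ i : ℕ, h i ≤ c'' * ((i:ℝ)+1)^(-a₀) := by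
    intro i
    have he1 : Real.exp (-(t * ((i:ℝ)+1)^β)) ≤ 1 := by
      apply Real.exp_le_one_iff.mpr
      have : (0:ℝ) < ((i:ℝ)+1)^β := Real.rpow_pos_of_pos (hx0 i) _
      nlinarith
    calc h i ≤ 1 * (c'' * ((i:ℝ)+1)^(-a₀)) := by
          apply mul_le_mul_of_nonneg_right he1 (by positivity)
      _ = c'' * ((i:ℝ)+1)^(-a₀) := one_mul _
  have Sh : Summable h :=
    Summable.of_nonneg_of_le (fun i => by positivity) hbound (Sa.mul_left c'')
  have htsum_eq : ∑' i : ℕ, Real.exp (-(2 * r * c' * ((i : ℝ) + 1) ^ (1/(1+α')))) *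
          (c * ((i : ℝ) + 1)⁻¹ - c'' * ((i : ℝ) + 1) ^ (-a₀)) = (∑' i, g i) - ∑' i, h i := by
    rw [← Summable.tsum_sub Sg Sh]
    refine tsum_congr fun i => ?_
    rw [hgdef, hhdef]
    simp only [← hβdef, ← htdef]
    ring
  rw [htsum_eq]
  -- bound tsum h by C
  have hhC : ∑' i, h i ≤ C :=
    Summable.tsum_le_tsum hbound Sh (Sa.mul_left c'')
  -- lower bound for tsum g via the harmonic sum
  set N : ℕ := ⌊r⁻¹⌋₊ with hNdef
  have hNr : (N:ℝ) ≤ r⁻¹ := Nat.floor_le (by positivity)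
  have hterm : ∀ i ∈ range N, a₃ * ((i:ℝ)+1)⁻¹ ≤ g i := by
    intro i hi
    have hiN : (i:ℝ)+1 ≤ N := by
      have : i + 1 ≤ N := mem_range.mp hi
      exact_mod_cast this
    have hxβ : ((i:ℝ)+1)^β ≤ r⁻¹ := by
      calc ((i:ℝ)+1)^β ≤ ((i:ℝ)+1)^(1:ℝ) :=
            Real.rpow_le_rpow_of_exponent_le (hx1 i) hβ1
        _ = (i:ℝ)+1 := Real.rpow_one _
        _ ≤ r⁻¹ := le_trans hiN hNr
    have ht2 : t * ((i:ℝ)+1)^β ≤ 2*c' := by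
      have : r * ((i:ℝ)+1)^β ≤ 1 := by
        calc r * ((i:ℝ)+1)^β ≤ r * r⁻¹ := by gcongr
          _ = 1 := mul_inv_cancel₀ hr.ne'
      calc t * ((i:ℝ)+1)^β = 2*c' * (r * ((i:ℝ)+1)^β) := by rw [htdef]; ring
        _ ≤ 2*c' * 1 := by gcongr
        _ = 2*c' := mul_one _
    have hexp : Real.exp (-(2*c')) ≤ Real.exp (-(t * ((i:ℝ)+1)^β)) :=
      Real.exp_le_exp.mpr (by linarith)
    calc a₃ * ((i:ℝ)+1)⁻¹ = Real.exp (-(2*c')) * (c * ((i:ℝ)+1)⁻¹) := by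
          rw [ha₃def]; ring
      _ ≤ Real.exp (-(t * ((i:ℝ)+1)^β)) * (c * ((i:ℝ)+1)⁻¹) := by
          apply mul_le_mul_of_nonneg_right hexp (by positivity)
  have hharm : a₃ * (harmonic N : ℝ) ≤ ∑' i, g i := by
    have h1 : (harmonic N : ℝ) = ∑ i ∈ range N, ((i:ℝ)+1)⁻¹ := by
      rw [harmonic]; push_cast; rfl
    calc a₃ * (harmonic N : ℝ) = ∑ i ∈ range N, a₃ * ((i:ℝ)+1)⁻¹ := by
          rw [h1, mul_sum]
      _ ≤ ∑ i ∈ range N, g i := sum_le_sum hterm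
      _ ≤ ∑' i, g i := Summable.sum_le_tsum _ (fun i _ => by positivity) Sg
  -- log bounds
  have hrinv1 : (1:ℝ) ≤ r⁻¹ := (one_le_inv₀ hr).mpr hr1
  have hlog2 : Real.log r⁻¹ ≤ (harmonic N : ℝ) := log_le_harmonic_floor r⁻¹ (by positivity)
  have hlog1 : Real.log (1 + r⁻¹) ≤ Real.log 2 + Real.log r⁻¹ := by
    rw [← Real.log_mul (by norm_num) (by positivity)]
    apply Real.log_le_log (by positivity)
    linarith
  have hfin : a₃ * Real.log (1 + r⁻¹) ≤ a₃ * Real.log 2 + a₃ * (harmonic N : ℝ) := by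
    calc a₃ * Real.log (1 + r⁻¹) ≤ a₃ * (Real.log 2 + (harmonic N : ℝ)) := by
          apply mul_le_mul_of_nonneg_left _ ha₃.le
          linarith
      _ = a₃ * Real.log 2 + a₃ * (harmonic N : ℝ) := by ring
  linarith
end
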